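/- arXiv:2501.09689 — 2 statements merged into one kernel-verified Lean document; each statement's English description precedes it below -/
import Mathlib

section
/- Contraction• is dual to deletion• on subspace-represented matroids: for every subspace W of F^n and every vector v ∈ F^n, (M(W ∩ span(v)^⊥))^* = M(span(W^⊥ ∪ {v})), i.e. the dual of the matroid of W ∩ span(v)^⊥ equals the matroid of the span of W^⊥ together with v. -/
open Matrix

/-- The orthogonal complement of a subspace of `Fin n → F` with respect to the
standard dot product. -/
def orthc {F : Type*} [Field F] {n : ℕ} (W : Submodule F (Fin n → F)) :
    Submodule F (Fin n → F) where
  carrier := {v | ∀ w ∈ W, v ⬝ᵥ w = 0}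
  add_mem' := by
    intro a b ha hb w hw
    simp [add_dotProduct, ha w hw, hb w hw]
  zero_mem' := by
    intro w hw
    simp
  smul_mem' := by
    intro c a ha w hw
    simp [smul_dotProduct, ha w hw]

/-- `S` is independent in the vector matroid `M(U)` of the subspace `U ⊆ F^n`
(the matroid on `[n]` represented by any matrix whose rows form a basis of
`U`): the columns indexed by `S` are linearly independent, which happens iff no
nonzero coefficient vector supported on `S` lies in `U^⊥`. -/
def indepOf {F : Type*} [Field F] {n : ℕ} (U : Submodule F (Fin n → F))
    (S : Set (Fin n)) : Prop :=
  ∀ a : Fin n → F, (∀ j ∉ S, a j = 0) → a ∈ orthc U → a = 0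

/-- A base of the matroid `M(U)`: a maximal independent set. -/
def baseOf {F : Type*} [Field F] {n : ℕ} (U : Submodule F (Fin n → F))
    (B : Set (Fin n)) : Prop :=
  indepOf U B ∧ ∀ B', B ⊆ B' → indepOf U B' → B' = B

section aux
variable {F : Type*} [Field F] {n : ℕ}

/-- coordinate functionals restricted to `U`. -/
def phiAux (U : Submodule F (Fin n → F)) (j : Fin n) : Module.Dual F U :=
  (LinearMap.proj j).comp U.subtype

lemma phiAux_apply (U : Submodule F (Fin n → F)) (j : Fin n) (u : U) :
    phiAux U j u = (u : Fin n → F) j := rfl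

lemma sum_phiAux_apply (U : Submodule F (Fin n → F)) (a : Fin n → F) (u : U) :
    (∑ j, a j • phiAux U j) u = a ⬝ᵥ (u : Fin n → F) := by
  simp [dotProduct, phiAux_apply, mul_comm]

lemma mem_orthc_iff_sum (U : Submodule F (Fin n → F)) (a : Fin n → F) :
    a ∈ orthc U ↔ ∑ j, a j • phiAux U j = 0 := by
  constructor
  · intro h
    ext u
    rw [sum_phiAux_apply]
    exact h u u.2
  · intro h w hw
    have := congrArg (fun f : Module.Dual F U => f ⟨w, hw⟩) h
    simpa [sum_phiAux_apply] using this

lemma indepOf_iff_sum (U : Submodule F (Fin n → F)) (T : Set (Fin n)) :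
    indepOf U T ↔
      ∀ a : Fin n → F, (∀ j ∉ T, a j = 0) → ∑ j, a j • phiAux U j = 0 → a = 0 := by
  unfold indepOf
  simp_rw [mem_orthc_iff_sum]

lemma sum_mem_span_phiAux (U : Submodule F (Fin n → F)) (T : Set (Fin n))
    (a : Fin n → F) (ha : ∀ j ∉ T, a j = 0) :
    ∑ j, a j • phiAux U j ∈ Submodule.span F (phiAux U '' T) := by
  refine Submodule.sum_mem _ fun j _ => ?_
  by_cases hj : j ∈ T
  · exact Submodule.smul_mem _ _ (Submodule.subset_span ⟨j, hj, rfl⟩)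
  · simp [ha j hj]

lemma mem_span_phiAux_iff (U : Submodule F (Fin n → F)) (T : Set (Fin n))
    (f : Module.Dual F U) :
    f ∈ Submodule.span F (phiAux U '' T) ↔
      ∃ c : Fin n → F, (∀ j ∉ T, c j = 0) ∧ f = ∑ j, c j • phiAux U j := by
  classical
  constructor
  · intro hf
    set ψ : Fin n → Module.Dual F U := fun j => if j ∈ T then phiAux U j else 0 with hψ
    have hle : Submodule.span F (phiAux U '' T) ≤ Submodule.span F (Set.range ψ) := by
      refine Submodule.span_le.2 ?_
      rintro _ ⟨j, hj, rfl⟩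
      exact Submodule.subset_span ⟨j, by simp [hψ, hj]⟩
    obtain ⟨c, hc⟩ := (Submodule.mem_span_range_iff_exists_fun F).1 (hle hf)
    refine ⟨fun j => if j ∈ T then c j else 0, fun j hj => by simp [hj], ?_⟩
    rw [← hc]
    refine Finset.sum_congr rfl fun j _ => ?_
    by_cases hj : j ∈ T <;> simp [hψ, hj]
  · rintro ⟨c, hc, rfl⟩
    exact sum_mem_span_phiAux U T c hc

/-- spanning ↔ injectivity of coordinate restriction -/
lemma span_phiAux_eq_top (U : Submodule F (Fin n → F)) (T : Set (Fin n))
    (h : ∀ u ∈ U, (∀ j ∈ T, u j = 0) → u = 0) :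
    Submodule.span F (phiAux U '' T) = ⊤ := by
  have : FiniteDimensional F U := inferInstance
  refine Submodule.span_eq_top_of_ne_zero ?_
  rintro z hz
  by_contra hcon
  push_neg at hcon
  refine hz (Subtype.ext ?_)
  have hz0 : (z : Fin n → F) = 0 := h z z.2 fun j hj => by
    have := hcon (phiAux U j) ⟨j, hj, rfl⟩
    simpa [phiAux_apply] using this
  simpa using hz0

lemma injective_of_span_phiAux_eq_top (U : Submodule F (Fin n → F)) (T : Set (Fin n))
    (h : Submodule.span F (phiAux U '' T) = ⊤) :
    ∀ u ∈ U, (∀ j ∈ T, u j = 0) → u = 0 := by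
  intro u hu hvan
  have key : ∀ f : Module.Dual F U, f ⟨u, hu⟩ = 0 := by
    intro f
    have hf : f ∈ Submodule.span F (phiAux U '' T) := h ▸ Submodule.mem_top
    induction hf using Submodule.span_induction with
    | mem f hf => obtain ⟨j, hj, rfl⟩ := hf; simpa [phiAux_apply] using hvan j hj
    | zero => simp
    | add f g _ _ hf hg => simp [hf, hg]
    | smul c f _ hf => simp [hf]
  have := (Module.forall_dual_apply_eq_zero_iff F (⟨u, hu⟩ : U)).1 key
  simpa using congrArg (Subtype.val) this

end aux

section core
variable {F : Type*} [Field F] {n : ℕ}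

lemma indepOf_insert (U : Submodule F (Fin n → F)) (T : Set (Fin n)) (k : Fin n)
    (hk : phiAux U k ∉ Submodule.span F (phiAux U '' T)) (hT : indepOf U T) :
    indepOf U (insert k T) := by
  classical
  rw [indepOf_iff_sum] at hT ⊢
  intro a ha hsum
  have hak : a k = 0 := by
    by_contra hak
    set c : Fin n → F := a - Pi.single k (a k) with hc
    have hcsupp : ∀ j ∉ T, c j = 0 := by
      intro j hj
      by_cases hjk : j = k
      · subst hjk; simp [hc]
      · have : a j = 0 := ha j (by simp [hj, hjk])
        simp [hc, hjk, this]
    have hsum' : ∑ j, c j • phiAux U j = -(a k • phiAux U k) := by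
      ext u
      have h0 : a ⬝ᵥ (u : Fin n → F) = 0 := by
        simpa [sum_phiAux_apply] using congrArg (fun f : Module.Dual F ↥U => f u) hsum
      rw [dotProduct] at h0
      simp [sum_phiAux_apply, hc, dotProduct, phiAux_apply, sub_mul,
        Finset.sum_sub_distrib, h0, Pi.single_apply, ite_mul]
    refine hk ?_
    have hmem : ∑ j, c j • phiAux U j ∈ Submodule.span F (phiAux U '' T) :=
      sum_mem_span_phiAux U T c hcsupp
    rw [hsum'] at hmem
    have : a k • phiAux U k ∈ Submodule.span F (phiAux U '' T) := by
      simpa using (Submodule.span F (phiAux U '' T)).neg_mem hmem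
    have := (Submodule.span F (phiAux U '' T)).smul_mem (a k)⁻¹ this
    rwa [smul_smul, inv_mul_cancel₀ hak, one_smul] at this
  refine hT a (fun j hj => ?_) hsum
  by_cases hjk : j = k
  · subst hjk; exact hak
  · exact ha j (by simp [hj, hjk])

lemma span_phiAux_univ (U : Submodule F (Fin n → F)) :
    Submodule.span F (phiAux U '' (Set.univ : Set (Fin n))) = ⊤ :=
  span_phiAux_eq_top U _ fun u _ h => funext fun j => h j trivial

lemma baseOf_spans (U : Submodule F (Fin n → F)) (B : Set (Fin n)) (hB : baseOf U B) :
    Submodule.span F (phiAux U '' B) = ⊤ := by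
  by_contra hcon
  have : ∃ k : Fin n, phiAux U k ∉ Submodule.span F (phiAux U '' B) := by
    by_contra h
    push_neg at h
    refine hcon (top_le_iff.1 ?_)
    rw [← span_phiAux_univ U]
    refine Submodule.span_le.2 ?_
    rintro _ ⟨j, -, rfl⟩
    exact h j
  obtain ⟨k, hk⟩ := this
  have hkB : k ∉ B := fun h => hk (Submodule.subset_span ⟨k, h, rfl⟩)
  have hins := indepOf_insert U B k hk hB.1
  have := hB.2 (insert k B) (Set.subset_insert k B) hins
  exact hkB (this ▸ Set.mem_insert k B)

lemma core_duality (U : Submodule F (Fin n → F)) (S : Set (Fin n)) :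
    (∃ B, baseOf U B ∧ Disjoint B S) ↔
      ∀ a : Fin n → F, (∀ j ∉ S, a j = 0) → a ∈ U → a = 0 := by
  classical
  constructor
  · rintro ⟨B, hB, hdisj⟩ a ha haU
    have hspan := baseOf_spans U B hB
    refine injective_of_span_phiAux_eq_top U B hspan a haU fun j hj => ?_
    exact ha j (fun hjS => hdisj.ne_of_mem hj hjS rfl)
  · intro h
    -- span over Sᶜ is ⊤
    have hspanSc : Submodule.span F (phiAux U '' Sᶜ) = ⊤ :=
      span_phiAux_eq_top U Sᶜ fun u hu hvan =>
        h u (fun j hj => hvan j hj) hu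
    -- pick a maximal independent subset of Sᶜ
    obtain ⟨B, hBmem, hBmax⟩ :=
      Set.Finite.exists_maximalFor (id : Set (Fin n) → Set (Fin n))
        {T | T ⊆ Sᶜ ∧ indepOf U T} (Set.toFinite _)
        ⟨∅, by
          refine ⟨Set.empty_subset _, fun a ha _ => funext fun j => ha j (by simp)⟩⟩
    obtain ⟨hBsub, hBindep⟩ := hBmem
    -- B spans
    have hspanB : Submodule.span F (phiAux U '' B) = ⊤ := by
      by_contra hcon
      have : ∃ k ∈ Sᶜ, phiAux U k ∉ Submodule.span F (phiAux U '' B) := by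
        by_contra hcon2
        push_neg at hcon2
        refine hcon (top_le_iff.1 ?_)
        rw [← hspanSc]
        refine Submodule.span_le.2 ?_
        rintro _ ⟨j, hj, rfl⟩
        exact hcon2 j hj
      obtain ⟨k, hkSc, hk⟩ := this
      have hkB : k ∉ B := fun h2 => hk (Submodule.subset_span ⟨k, h2, rfl⟩)
      have := hBmax (j := insert k B)
        ⟨Set.insert_subset hkSc hBsub, indepOf_insert U B k hk hBindep⟩
        (Set.subset_insert k B)
      exact hkB (this (Set.mem_insert k B))
    refine ⟨B, ⟨hBindep, ?_⟩, Set.disjoint_left.mpr fun {k} hk => hBsub hk⟩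
    intro B' hBB' hB'
    refine Set.Subset.antisymm (fun k hk => ?_) hBB'
    by_contra hkB
    have hphik : phiAux U k ∈ Submodule.span F (phiAux U '' B) :=
      hspanB ▸ Submodule.mem_top
    obtain ⟨c, hcsupp, hceq⟩ := (mem_span_phiAux_iff U B _).1 hphik
    set a : Fin n → F := c - Pi.single k 1 with ha
    have hasupp : ∀ j ∉ B', a j = 0 := by
      intro j hj
      have hjk : j ≠ k := fun h2 => hj (h2 ▸ hk)
      have : c j = 0 := hcsupp j fun h2 => hj (hBB' h2)
      simp [ha, hjk, this]
    have hsum : ∑ j, a j • phiAux U j = 0 := by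
      ext u
      have h0 : (u : Fin n → F) k = c ⬝ᵥ (u : Fin n → F) := by
        simpa [sum_phiAux_apply, phiAux_apply] using
          congrArg (fun f : Module.Dual F ↥U => f u) hceq
      rw [dotProduct] at h0
      simp [sum_phiAux_apply, ha, dotProduct, phiAux_apply, sub_mul,
        Finset.sum_sub_distrib, ← h0, Pi.single_apply, ite_mul]
    have := (indepOf_iff_sum U B').1 hB' a hasupp hsum
    have hak : a k = -1 := by
      have : c k = 0 := hcsupp k hkB
      simp [ha, this]
    rw [this] at hak
    simpa using hak

end core

section orthclemmas
variable {F : Type*} [Field F] {n : ℕ}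

/-- The linear map `x ↦ (u ↦ x ⬝ᵥ u)` into the dual of `U`. -/
def psiAux (U : Submodule F (Fin n → F)) : (Fin n → F) →ₗ[F] Module.Dual F U :=
  ∑ j : Fin n, LinearMap.smulRight (LinearMap.proj j) (phiAux U j)

lemma psiAux_apply (U : Submodule F (Fin n → F)) (x : Fin n → F) :
    psiAux U x = ∑ j, x j • phiAux U j := by
  simp [psiAux]

lemma ker_psiAux (U : Submodule F (Fin n → F)) :
    LinearMap.ker (psiAux U) = orthc U := by
  ext x
  rw [LinearMap.mem_ker, psiAux_apply, ← mem_orthc_iff_sum]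

lemma range_psiAux (U : Submodule F (Fin n → F)) :
    LinearMap.range (psiAux U) = ⊤ := by
  rw [eq_top_iff]
  intro f _
  have hf : f ∈ Submodule.span F (phiAux U '' (Set.univ : Set (Fin n))) := by
    rw [span_phiAux_univ U]; trivial
  obtain ⟨c, -, rfl⟩ := (mem_span_phiAux_iff U _ f).1 hf
  exact ⟨c, (psiAux_apply U c)⟩

lemma finrank_orthc (U : Submodule F (Fin n → F)) :
    Module.finrank F U + Module.finrank F (orthc U) = n := by
  have h := LinearMap.finrank_range_add_finrank_ker (psiAux U)
  rw [ker_psiAux, range_psiAux, Module.finrank_fin_fun, finrank_top,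
    Subspace.dual_finrank_eq] at h
  exact h

lemma le_orthc_orthc (U : Submodule F (Fin n → F)) : U ≤ orthc (orthc U) := by
  intro u hu a ha
  rw [dotProduct_comm]
  exact ha u hu

lemma orthc_orthc (U : Submodule F (Fin n → F)) : orthc (orthc U) = U := by
  have h1 := finrank_orthc U
  have h2 := finrank_orthc (orthc U)
  refine (Submodule.eq_of_le_of_finrank_le (le_orthc_orthc U) (by omega)).symm

lemma orthc_sup (A B : Submodule F (Fin n → F)) :
    orthc (A ⊔ B) = orthc A ⊓ orthc B := by
  ext x
  constructor
  · intro h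
    exact ⟨fun w hw => h w (Submodule.mem_sup_left hw),
      fun w hw => h w (Submodule.mem_sup_right hw)⟩
  · rintro ⟨hA, hB⟩ w hw
    obtain ⟨a, ha, b, hb, rfl⟩ := Submodule.mem_sup.1 hw
    rw [dotProduct_add, hA a ha, hB b hb, add_zero]

end orthclemmas


/-!
STATEMENT 6: contraction• is dual to deletion• — for every subspace `W` of
`F^n` and every `v ∈ F^n`, `(M(W ∩ span(v)^⊥))✶ = M(span(W^⊥ ∪ {v}))`.
The dual matroid is expressed by its independent sets: `S` is independent in
`M✶` iff some base of `M` is disjoint from `S`.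
-/
theorem stmt6 {F : Type*} [Field F] {n : ℕ}
    (hnd : ∀ x : Fin n → F, (∀ y, x ⬝ᵥ y = 0) → x = 0)
    (W : Submodule F (Fin n → F)) (v : Fin n → F) (S : Set (Fin n)) :
    (∃ B, baseOf (W ⊓ orthc (Submodule.span F {v})) B ∧ Disjoint B S) ↔
      indepOf (Submodule.span F ((orthc W : Set (Fin n → F)) ∪ {v})) S := by
  have key : orthc (Submodule.span F ((orthc W : Set (Fin n → F)) ∪ {v}))
      = W ⊓ orthc (Submodule.span F {v}) := by
    rw [Submodule.span_union, Submodule.span_eq, orthc_sup, orthc_orthc]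
  rw [core_duality (W ⊓ orthc (Submodule.span F {v})) S]
  unfold indepOf
  rw [key]
end

section
/- Let M be a matroid with largest circuit of size c (c = 1 if M has no circuit). Then log₂(c) ≤ cd(M) ≤ c(c+1)/2, where cd denotes contraction-depth. -/
open Matroid

/-- A circuit of a matroid: a minimal dependent set. -/
def IsCircuitM {α : Type*} (M : Matroid α) (C : Set α) : Prop :=
  M.Dep C ∧ ∀ D ⊂ C, M.Indep D

/-- `e` and `f` lie in a common circuit (with `e = f` allowed for ground
elements). -/
def ConnTo {α : Type*} (M : Matroid α) (e f : α) : Prop :=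
  (e ∈ M.E ∧ e = f) ∨ ∃ C, IsCircuitM M C ∧ e ∈ C ∧ f ∈ C

/-- A matroid is connected if every two of its elements lie in a common
circuit. -/
def ConnM {α : Type*} (M : Matroid α) : Prop :=
  ∀ e ∈ M.E, ∀ f ∈ M.E, ConnTo M e f

/-- The connected component of an element `e`. -/
def compOf {α : Type*} (M : Matroid α) (e : α) : Set α := {f | ConnTo M e f}

/-- `S` is a connected component of `M`. -/
def IsComponentM {α : Type*} (M : Matroid α) (S : Set α) : Prop :=
  ∃ e ∈ M.E, S = compOf M e

/-- Deletion of a single element. -/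
def mdelete {α : Type*} (M : Matroid α) (e : α) : Matroid α :=
  M ↾ (M.E \ {e})

/-- Contraction of a single element (via duality with deletion). -/
def mcontract {α : Type*} (M : Matroid α) (e : α) : Matroid α :=
  (mdelete M✶ e)✶

/-- `CdLE M d` means that the contraction-depth of `M` is at most `d`:
`cd` of a single-element matroid is `1`; for a disconnected matroid it is the
maximum over components; for a connected matroid it is `1` plus the minimum
over single-element contractions. -/
inductive CdLE {α : Type*} : Matroid α → ℕ → Prop
  | empty (M : Matroid α) (d : ℕ) : M.E = ∅ → CdLE M d
  | single (M : Matroid α) (d : ℕ) (e : α) : M.E = {e} → CdLE M (d + 1)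
  | comp (M : Matroid α) (d : ℕ) : ¬ ConnM M →
      (∀ e ∈ M.E, CdLE (M ↾ compOf M e) d) → CdLE M d
  | contr (M : Matroid α) (d : ℕ) (e : α) : ConnM M → e ∈ M.E →
      CdLE (mcontract M e) d → CdLE M (d + 1)

/-- `DdLE M d` means that the deletion-depth of `M` is at most `d`. -/
inductive DdLE {α : Type*} : Matroid α → ℕ → Prop
  | empty (M : Matroid α) (d : ℕ) : M.E = ∅ → DdLE M d
  | single (M : Matroid α) (d : ℕ) (e : α) : M.E = {e} → DdLE M (d + 1)
  | comp (M : Matroid α) (d : ℕ) : ¬ ConnM M →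
      (∀ e ∈ M.E, DdLE (M ↾ compOf M e) d) → DdLE M d
  | contr (M : Matroid α) (d : ℕ) (e : α) : ConnM M → e ∈ M.E →
      DdLE (mdelete M e) d → DdLE M (d + 1)

/-- The contraction-depth of a matroid. -/
noncomputable def cdepth {α : Type*} (M : Matroid α) : ℕ := sInf {d | CdLE M d}

/-- The deletion-depth of a matroid. -/
noncomputable def ddepth {α : Type*} (M : Matroid α) : ℕ := sInf {d | DdLE M d}


open Set

namespace CDWork


variable {α : Type*}

/-- ℕ-valued rank of a set in a matroid. -/
noncomputable def nrk (M : Matroid α) (X : Set α) : ℕ := (M.exists_isBasis' X).choose.ncard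

lemma nrk_eq_of_basis' {M : Matroid α} {I X : Set α} (h : M.IsBasis' I X) :
    nrk M X = I.ncard := by
  have h2 := (M.exists_isBasis' X).choose_spec
  have b1 : (M ↾ X).IsBase (M.exists_isBasis' X).choose := by
    rw [isBase_restrict_iff']; exact h2
  have b2 : (M ↾ X).IsBase I := by rw [isBase_restrict_iff']; exact h
  exact b1.ncard_eq_ncard_of_isBase b2

lemma ncard_le_nrk {M : Matroid α} {I X : Set α} (hI : M.Indep I) (hIX : I ⊆ X)
    [M.Finite] : I.ncard ≤ nrk M X := by
  obtain ⟨J, hJ, hIJ⟩ := hI.subset_isBasis'_of_subset hIX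
  rw [nrk_eq_of_basis' hJ]
  exact ncard_le_ncard hIJ (M.set_finite J hJ.indep.subset_ground)

lemma nrk_indep {M : Matroid α} {X : Set α} (h : M.Indep X) : nrk M X = X.ncard :=
  nrk_eq_of_basis' h.isBasis_self.isBasis'

lemma nrk_mono {M : Matroid α} {X Y : Set α} (h : X ⊆ Y) [M.Finite] :
    nrk M X ≤ nrk M Y := by
  obtain ⟨I, hI⟩ := M.exists_isBasis' X
  rw [nrk_eq_of_basis' hI]
  exact ncard_le_nrk hI.indep (hI.subset.trans h)

lemma nrk_le_ncard {M : Matroid α} (X : Set α) (hfin : X.Finite) : nrk M X ≤ X.ncard := by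
  obtain ⟨I, hI⟩ := M.exists_isBasis' X
  rw [nrk_eq_of_basis' hI]
  exact ncard_le_ncard hI.subset hfin

lemma indep_of_nrk_eq_ncard {M : Matroid α} {X : Set α}
    (hfin : X.Finite) (h : nrk M X = X.ncard) : M.Indep X := by
  obtain ⟨I, hI⟩ := M.exists_isBasis' X
  rw [nrk_eq_of_basis' hI] at h
  rw [← Set.eq_of_subset_of_ncard_le hI.subset h.ge hfin]
  exact hI.indep

lemma dep_iff_nrk_lt {M : Matroid α} {X : Set α} (hX : X ⊆ M.E) [M.Finite] :
    M.Dep X ↔ nrk M X < X.ncard := by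
  have hfin : X.Finite := M.set_finite X hX
  constructor
  · intro hd
    rcases lt_or_eq_of_le (nrk_le_ncard X hfin) with h | h
    · exact h
    · exact absurd (indep_of_nrk_eq_ncard hfin h) hd.not_indep
  · intro h
    refine ⟨fun hi => ?_, hX⟩
    rw [nrk_indep hi] at h; exact lt_irrefl _ h

lemma nrk_closure (M : Matroid α) (X : Set α) : nrk M (M.closure X) = nrk M X := by
  obtain ⟨I, hI⟩ := M.exists_isBasis' X
  rw [nrk_eq_of_basis' hI, nrk_eq_of_basis' hI.isBasis_closure_right.isBasis']

lemma nrk_le_of_subset_closure {M : Matroid α} {X Y : Set α} (h : X ⊆ M.closure Y)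
    [M.Finite] : nrk M X ≤ nrk M Y := by
  rw [← nrk_closure M Y]; exact nrk_mono h

lemma nrk_union_closure_right (M : Matroid α) (X Y : Set α) :
    nrk M (X ∪ M.closure Y) = nrk M (X ∪ Y) := by
  rw [← nrk_closure M (X ∪ M.closure Y), closure_union_closure_right_eq, nrk_closure]

lemma nrk_union_eq_of_subset_closure {M : Matroid α} {X Y Z : Set α}
    (h : Z ⊆ M.closure Y) [M.Finite] : nrk M (X ∪ Y ∪ Z) = nrk M (X ∪ Y) := by
  refine le_antisymm ?_ (nrk_mono subset_union_left)
  have h1 : X ∪ Y ∪ Z ⊆ (X ∪ Y) ∪ M.closure (X ∪ Y) := by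
    refine union_subset (subset_union_left) (h.trans ?_)
    exact (M.closure_subset_closure subset_union_right).trans subset_union_right
  calc nrk M (X ∪ Y ∪ Z) ≤ nrk M ((X ∪ Y) ∪ M.closure (X ∪ Y)) := nrk_mono h1
    _ = nrk M ((X ∪ Y) ∪ (X ∪ Y)) := nrk_union_closure_right M _ _
    _ = nrk M (X ∪ Y) := by rw [union_self]

/-- submodularity -/
lemma nrk_submod (M : Matroid α) (X Y : Set α) [M.Finite] :
    nrk M (X ∪ Y) + nrk M (X ∩ Y) ≤ nrk M X + nrk M Y := by
  obtain ⟨I0, hI0⟩ := M.exists_isBasis' (X ∩ Y)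
  obtain ⟨IX, hIX, hI0X⟩ := hI0.indep.subset_isBasis'_of_subset (hI0.subset.trans inter_subset_left)
  obtain ⟨IU, hIU, hIXU⟩ := hIX.indep.subset_isBasis'_of_subset (hIX.subset.trans subset_union_left)
  have hIUfin : IU.Finite := M.set_finite IU hIU.indep.subset_ground
  have hsub : IU \ IX ⊆ Y := by
    intro x hx
    have hxXY : x ∈ X ∪ Y := hIU.subset hx.1
    rcases hxXY with hxX | hxY
    · exfalso
      refine hIX.insert_not_indep ⟨hxX, hx.2⟩ (hIU.indep.subset ?_)
      exact insert_subset hx.1 hIXU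
    · exact hxY
  have hkey : (IU \ IX).ncard + I0.ncard ≤ nrk M Y := by
    have hind : M.Indep ((IU \ IX) ∪ I0) :=
      hIU.indep.subset (union_subset diff_subset (hI0X.trans hIXU))
    have hsub2 : (IU \ IX) ∪ I0 ⊆ Y :=
      union_subset hsub (hI0.subset.trans inter_subset_right)
    have hdisj : Disjoint (IU \ IX) I0 :=
      (disjoint_sdiff_left).mono_right hI0X
    have := ncard_le_nrk hind hsub2
    rwa [ncard_union_eq hdisj (hIUfin.subset diff_subset)
      (hIUfin.subset (hI0X.trans hIXU))] at this
  rw [nrk_eq_of_basis' hIU, nrk_eq_of_basis' hI0, nrk_eq_of_basis' hIX]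
  have hcard : IU.ncard = IX.ncard + (IU \ IX).ncard := by
    rw [← ncard_union_eq disjoint_sdiff_right (hIUfin.subset hIXU) (hIUfin.subset diff_subset),
      union_diff_cancel hIXU]
  omega


/-! ### Circuit basics -/

lemma circ_dep {M : Matroid α} {C : Set α} (h : IsCircuitM M C) : M.Dep C := h.1

lemma circ_subset_ground {M : Matroid α} {C : Set α} (h : IsCircuitM M C) : C ⊆ M.E :=
  h.1.subset_ground

lemma circ_finite {M : Matroid α} {C : Set α} [M.Finite] (h : IsCircuitM M C) : C.Finite :=
  M.set_finite C (circ_subset_ground h)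

lemma circ_nonempty {M : Matroid α} {C : Set α} (h : IsCircuitM M C) : C.Nonempty := by
  rcases eq_empty_or_nonempty C with rfl | hne
  · exact absurd M.empty_indep h.1.not_indep
  · exact hne

lemma circ_ssubset_indep {M : Matroid α} {C D : Set α} (h : IsCircuitM M C) (hD : D ⊂ C) :
    M.Indep D := h.2 D hD

lemma circ_diff_singleton_indep {M : Matroid α} {C : Set α} (h : IsCircuitM M C) {x : α}
    (hx : x ∈ C) : M.Indep (C \ {x}) :=
  h.2 _ (sdiff_singleton_ssubset.2 hx)

lemma circ_not_subset_indep {M : Matroid α} {C I : Set α} (h : IsCircuitM M C)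
    (hI : M.Indep I) : ¬ C ⊆ I := fun hCI => h.1.not_indep (hI.subset hCI)

lemma circ_eq_of_subset {M : Matroid α} {C D : Set α} (hC : IsCircuitM M C)
    (hD : IsCircuitM M D) (h : D ⊆ C) : D = C := by
  by_contra hne
  exact hD.1.not_indep (hC.2 D (ssubset_of_subset_of_ne h hne))

lemma circ_ncard_pos {M : Matroid α} {C : Set α} [M.Finite] (h : IsCircuitM M C) :
    1 ≤ C.ncard :=
  (circ_nonempty h).ncard_pos (circ_finite h)

/-- every dependent set contains a circuit -/
lemma exists_circ_of_dep_aux {M : Matroid α} [M.Finite] :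
    ∀ n (X : Set α), X.ncard ≤ n → M.Dep X → ∃ C ⊆ X, IsCircuitM M C := by
  intro n
  induction n with
  | zero =>
    intro X h hX
    have hfin := M.set_finite X hX.subset_ground
    have hX0 : X = ∅ := by rw [← ncard_eq_zero hfin]; omega
    subst hX0
    exact absurd M.empty_indep hX.not_indep
  | succ n ih =>
    intro X hle hX
    by_cases h : ∀ D ⊂ X, M.Indep D
    · exact ⟨X, subset_rfl, hX, h⟩
    · push_neg at h
      obtain ⟨D, hDX, hDdep⟩ := h
      have hD : M.Dep D := ⟨hDdep, hDX.subset.trans hX.subset_ground⟩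
      have hn : D.ncard ≤ n := by
        have := ncard_lt_ncard hDX (M.set_finite X hX.subset_ground); omega
      obtain ⟨C, hCD, hC⟩ := ih D hn hD
      exact ⟨C, hCD.trans hDX.subset, hC⟩

lemma exists_circ_of_dep {M : Matroid α} [M.Finite] {X : Set α} (hX : M.Dep X) :
    ∃ C ⊆ X, IsCircuitM M C :=
  exists_circ_of_dep_aux X.ncard X le_rfl hX

lemma circ_basis_diff_singleton {M : Matroid α} {C : Set α} (h : IsCircuitM M C) {x : α}
    (hx : x ∈ C) : M.IsBasis (C \ {x}) C := by
  refine (circ_diff_singleton_indep h hx).isBasis_of_forall_insert diff_subset ?_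
  intro e he
  have hex : e ∈ ({x} : Set α) := by
    by_contra hne
    exact he.2 ⟨he.1, hne⟩
  rw [mem_singleton_iff] at hex
  subst hex
  rw [insert_diff_singleton, insert_eq_of_mem hx]
  exact h.1

lemma circ_ncard_eq_nrk_add_one {M : Matroid α} {C : Set α} [M.Finite] (h : IsCircuitM M C) :
    C.ncard = nrk M C + 1 := by
  obtain ⟨x, hx⟩ := circ_nonempty h
  rw [nrk_eq_of_basis' (circ_basis_diff_singleton h hx).isBasis',
    ncard_diff_singleton_add_one hx (circ_finite h)]

lemma circ_nrk_diff {M : Matroid α} {C : Set α} (h : IsCircuitM M C) {x : α}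
    (hx : x ∈ C) : x ∈ M.closure (C \ {x}) :=
  (circ_basis_diff_singleton h hx).subset_closure hx

lemma subset_closure_diff_singleton {M : Matroid α} {C : Set α} [M.Finite]
    (h : IsCircuitM M C) {x : α} (hx : x ∈ C) : C ⊆ M.closure (C \ {x}) := by
  intro y hy
  rcases eq_or_ne y x with rfl | hne
  · exact circ_nrk_diff h hx
  · exact M.subset_closure (C \ {x}) ((circ_diff_singleton_indep h hx).subset_ground) ⟨hy, hne⟩

/-- a circuit through `f` inside `insert f Y` whenever `f ∈ cl Y \ Y`. -/
lemma exists_circ_of_mem_closure {M : Matroid α} [M.Finite] {Y : Set α} {f : α}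
    (hf : f ∈ M.closure Y) (hfY : f ∉ Y) :
    ∃ C, IsCircuitM M C ∧ f ∈ C ∧ C ⊆ insert f Y := by
  obtain ⟨J, hJ⟩ := M.exists_isBasis' Y
  have hfJ : f ∈ M.closure J := by rwa [hJ.closure_eq_closure]
  have hfnJ : f ∉ J := fun h => hfY (hJ.subset h)
  have hdep : M.Dep (insert f J) := hJ.indep.insert_dep_iff.2 ⟨hfJ, hfnJ⟩
  obtain ⟨C, hCsub, hC⟩ := exists_circ_of_dep hdep
  refine ⟨C, hC, ?_, hCsub.trans (insert_subset_insert hJ.subset)⟩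
  by_contra hfC
  exact hC.1.not_indep (hJ.indep.subset (fun y hy => ((hCsub hy).resolve_left
    (fun h => hfC (h ▸ hy)))))

/-- strong circuit elimination -/
lemma strong_elim {M : Matroid α} [M.Finite] {C1 C2 : Set α} {e f : α}
    (h1 : IsCircuitM M C1) (h2 : IsCircuitM M C2) (he : e ∈ C1 ∩ C2) (hf : f ∈ C1 \ C2) :
    ∃ C, IsCircuitM M C ∧ f ∈ C ∧ C ⊆ (C1 ∪ C2) \ {e} := by
  set Y : Set α := (C1 ∪ C2) \ {e, f} with hY
  have hC2e : C2 \ {e} ⊆ Y := by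
    intro y hy
    refine ⟨Or.inr hy.1, ?_⟩
    simp only [mem_insert_iff, mem_singleton_iff]
    push_neg
    exact ⟨fun h => hy.2 (h ▸ rfl), fun h => hf.2 (h ▸ hy.1)⟩
  have heY : e ∈ M.closure Y :=
    M.closure_subset_closure hC2e (circ_nrk_diff h2 he.2)
  have hC1f : C1 \ {f} ⊆ insert e Y := by
    intro y hy
    rcases eq_or_ne y e with rfl | hne
    · exact mem_insert _ _
    · refine mem_insert_of_mem _ ⟨Or.inl hy.1, ?_⟩
      simp only [mem_insert_iff, mem_singleton_iff]
      push_neg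
      exact ⟨hne, fun h => hy.2 (h ▸ rfl)⟩
  have hfY : f ∈ M.closure Y := by
    have h1' : f ∈ M.closure (C1 \ {f}) := circ_nrk_diff h1 hf.1
    have h2' : f ∈ M.closure (insert e Y) := M.closure_subset_closure hC1f h1'
    rwa [closure_insert_eq_of_mem_closure heY] at h2'
  have hfnY : f ∉ Y := fun h => h.2 (Or.inr rfl)
  obtain ⟨C, hC, hfC, hCsub⟩ := exists_circ_of_mem_closure hfY hfnY
  refine ⟨C, hC, hfC, hCsub.trans ?_⟩
  intro y hy
  rcases hy with rfl | hy
  · exact ⟨Or.inl hf.1, fun h => hf.2 (h ▸ he.2)⟩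
  · refine ⟨hy.1, fun hh => hy.2 ?_⟩
    rw [mem_singleton_iff] at hh
    subst hh
    exact mem_insert _ _


/-! ### Connectivity: basics and transitivity -/

lemma connTo_ground_left {M : Matroid α} {e f : α} (h : ConnTo M e f) : e ∈ M.E := by
  rcases h with ⟨he, _⟩ | ⟨C, hC, heC, _⟩
  · exact he
  · exact circ_subset_ground hC heC

lemma connTo_ground_right {M : Matroid α} {e f : α} (h : ConnTo M e f) : f ∈ M.E := by
  rcases h with ⟨he, rfl⟩ | ⟨C, hC, _, hfC⟩
  · exact he
  · exact circ_subset_ground hC hfC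

lemma connTo_symm {M : Matroid α} {e f : α} (h : ConnTo M e f) : ConnTo M f e := by
  rcases h with ⟨he, rfl⟩ | ⟨C, hC, heC, hfC⟩
  · exact Or.inl ⟨he, rfl⟩
  · exact Or.inr ⟨C, hC, hfC, heC⟩

lemma connTo_of_mem_circ {M : Matroid α} {C : Set α} {e f : α} (hC : IsCircuitM M C)
    (he : e ∈ C) (hf : f ∈ C) : ConnTo M e f := Or.inr ⟨C, hC, he, hf⟩

lemma circ_chain {M : Matroid α} [M.Finite] {x y : α} :
    ∀ n (C1 C2 : Set α), (C1 ∪ C2).ncard ≤ n → IsCircuitM M C1 → IsCircuitM M C2 →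
      x ∈ C1 → y ∈ C2 → (C1 ∩ C2).Nonempty →
      ∃ C, IsCircuitM M C ∧ x ∈ C ∧ y ∈ C := by
  intro n
  induction n with
  | zero =>
    intro C1 C2 hle h1 h2 hx hy _
    exfalso
    have h1f := circ_finite h1
    have h2f := circ_finite h2
    have : (C1 ∪ C2).Nonempty := ⟨x, Or.inl hx⟩
    have := this.ncard_pos (h1f.union h2f)
    omega
  | succ n ih =>
    intro C1 C2 hle h1 h2 hx hy hint
    have hfinU : (C1 ∪ C2).Finite := (circ_finite h1).union (circ_finite h2)
    by_cases hyC1 : y ∈ C1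
    · exact ⟨C1, h1, hx, hyC1⟩
    by_cases hxC2 : x ∈ C2
    · exact ⟨C2, h2, hxC2, hy⟩
    obtain ⟨e, he⟩ := hint
    obtain ⟨C3, hC3, hxC3, hC3sub⟩ := strong_elim h1 h2 he ⟨hx, hxC2⟩
    by_cases hyC3 : y ∈ C3
    · exact ⟨C3, hC3, hxC3, hyC3⟩
    -- C3 has an element outside C1 (hence in C2)
    have hC3nsub : ¬ C3 ⊆ C1 := by
      intro hsub
      have := circ_eq_of_subset h1 hC3 hsub
      rw [this] at hC3sub
      exact (hC3sub he.1).2 rfl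
    obtain ⟨z, hzC3, hzC1⟩ := not_subset.1 hC3nsub
    have hzC2 : z ∈ C2 := ((hC3sub hzC3).1.resolve_left hzC1)
    -- pair (C3, C2)
    by_cases hU : C3 ∪ C2 = C1 ∪ C2
    · -- C1 \ C2 ⊆ C3
      have hC1diff : C1 \ C2 ⊆ C3 := by
        intro a ha
        have : a ∈ C3 ∪ C2 := hU ▸ Or.inl ha.1
        exact this.resolve_right ha.2
      -- symmetric circuit C4
      obtain ⟨C4, hC4, hyC4, hC4sub⟩ := strong_elim h2 h1 ⟨he.2, he.1⟩ ⟨hy, hyC1⟩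
      by_cases hxC4 : x ∈ C4
      · exact ⟨C4, hC4, hxC4, hyC4⟩
      have hC4nsub : ¬ C4 ⊆ C2 := by
        intro hsub
        have := circ_eq_of_subset h2 hC4 hsub
        rw [this] at hC4sub
        exact (hC4sub he.2).2 rfl
      obtain ⟨w, hwC4, hwC2⟩ := not_subset.1 hC4nsub
      have hwC1 : w ∈ C1 := by
        have := (hC4sub hwC4).1
        rcases this with h | h
        · exact absurd h hwC2
        · exact h
      by_cases hU2 : C1 ∪ C4 = C1 ∪ C2
      · -- C2 \ C1 ⊆ C4 ; use pair (C3, C4)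
        have hwC3 : w ∈ C3 := hC1diff ⟨hwC1, hwC2⟩
        have hsubU : C3 ∪ C4 ⊆ (C1 ∪ C2) \ {e} := by
          intro a ha
          rcases ha with ha | ha
          · exact hC3sub ha
          · have := hC4sub ha
            exact ⟨this.1.symm.imp id id |>.symm.elim (fun h => Or.inr h) (fun h => Or.inl h), this.2⟩
          
        have hlt : (C3 ∪ C4).ncard ≤ n := by
          have h1lt : (C3 ∪ C4).ncard < (C1 ∪ C2).ncard := by
            refine ncard_lt_ncard ?_ hfinU
            refine ssubset_of_subset_of_ssubset hsubU (sdiff_singleton_ssubset.2 (Or.inl he.1))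
          omega
        exact ih C3 C4 hlt hC3 hC4 hxC3 hyC4 ⟨w, hwC3, hwC4⟩
      · -- C1 ∪ C4 ⊊ C1 ∪ C2
        have hsub : C1 ∪ C4 ⊆ C1 ∪ C2 := by
          refine union_subset subset_union_left ?_
          intro a ha
          have := (hC4sub ha).1
          exact this.symm.imp id id |>.symm.elim (fun h => Or.inr h) (fun h => Or.inl h)
        have hlt : (C1 ∪ C4).ncard ≤ n := by
          have := ncard_lt_ncard (ssubset_of_subset_of_ne hsub hU2) hfinU
          omega
        exact ih C1 C4 hlt h1 hC4 hx hyC4 ⟨w, hwC1, hwC4⟩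
    · have hsub : C3 ∪ C2 ⊆ C1 ∪ C2 := by
        refine union_subset ?_ subset_union_right
        intro a ha
        exact (hC3sub ha).1
      have hlt : (C3 ∪ C2).ncard ≤ n := by
        have := ncard_lt_ncard (ssubset_of_subset_of_ne hsub hU) hfinU
        omega
      exact ih C3 C2 hlt hC3 h2 hxC3 hy ⟨z, hzC3, hzC2⟩

lemma connTo_trans {M : Matroid α} [M.Finite] {e f g : α} (h1 : ConnTo M e f)
    (h2 : ConnTo M f g) : ConnTo M e g := by
  rcases h1 with ⟨he, rfl⟩ | ⟨C1, hC1, heC1, hfC1⟩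
  · exact h2
  rcases h2 with ⟨hf, rfl⟩ | ⟨C2, hC2, hfC2, hgC2⟩
  · exact Or.inr ⟨C1, hC1, heC1, hfC1⟩
  obtain ⟨C, hC, heC, hgC⟩ :=
    circ_chain (C1 ∪ C2).ncard C1 C2 le_rfl hC1 hC2 heC1 hgC2 ⟨f, hfC1, hfC2⟩
  exact Or.inr ⟨C, hC, heC, hgC⟩

lemma mem_compOf_self {M : Matroid α} {e : α} (he : e ∈ M.E) : e ∈ compOf M e :=
  Or.inl ⟨he, rfl⟩

lemma compOf_subset_ground (M : Matroid α) (e : α) : compOf M e ⊆ M.E :=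
  fun _ h => connTo_ground_right h

lemma circ_subset_compOf {M : Matroid α} [M.Finite] {C : Set α} {e x : α}
    (hC : IsCircuitM M C) (hx : x ∈ compOf M e) (hxC : x ∈ C) : C ⊆ compOf M e :=
  fun y hy => connTo_trans hx (connTo_of_mem_circ hC hxC hy)

lemma compOf_ssubset {M : Matroid α} [M.Finite] (h : ¬ ConnM M) {e : α} (he : e ∈ M.E) :
    compOf M e ⊂ M.E := by
  rw [ConnM] at h
  push_neg at h
  obtain ⟨f, hf, g, hg, hfg⟩ := h
  refine ssubset_of_subset_of_ne (compOf_subset_ground M e) ?_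
  intro heq
  have hfc : f ∈ compOf M e := heq ▸ hf
  have hgc : g ∈ compOf M e := heq ▸ hg
  exact hfg (connTo_trans (connTo_symm hfc) hgc)

lemma circ_restrict_iff {M : Matroid α} {R C : Set α} (hR : R ⊆ M.E) :
    IsCircuitM (M ↾ R) C ↔ IsCircuitM M C ∧ C ⊆ R := by
  constructor
  · rintro ⟨hdep, hmin⟩
    rw [restrict_dep_iff] at hdep
    refine ⟨⟨⟨hdep.1, hdep.2.trans hR⟩, fun D hD => ?_⟩, hdep.2⟩
    have := hmin D hD
    rw [restrict_indep_iff] at this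
    exact this.1
  · rintro ⟨⟨hdep, hmin⟩, hCR⟩
    refine ⟨?_, fun D hD => ?_⟩
    · rw [restrict_dep_iff]; exact ⟨hdep.not_indep, hCR⟩
    · rw [restrict_indep_iff]
      exact ⟨hmin D hD, hD.subset.trans hCR⟩


/-! ### Contraction by a set, via duality -/

/-- Contraction of a set of elements. -/
def mcontractSet (M : Matroid α) (S : Set α) : Matroid α := (M✶ ↾ (M.E \ S))✶

lemma mcontract_eq_mcontractSet (M : Matroid α) (e : α) :
    mcontract M e = mcontractSet M {e} := rfl

@[simp] lemma mcontractSet_ground (M : Matroid α) (S : Set α) :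
    (mcontractSet M S).E = M.E \ S := rfl

lemma mcontractSet_finite (M : Matroid α) [M.Finite] (S : Set α) :
    (mcontractSet M S).Finite := ⟨M.ground_finite.subset diff_subset⟩

@[simp] lemma mcontractSet_empty (M : Matroid α) : mcontractSet M ∅ = M := by
  rw [mcontractSet, diff_empty, ← dual_ground, restrict_ground_eq_self, dual_dual]

lemma mcontractSet_mcontractSet (M : Matroid α) (S S' : Set α) :
    mcontractSet (mcontractSet M S) S' = mcontractSet M (S ∪ S') := by
  simp only [mcontractSet, dual_dual, dual_ground, restrict_ground_eq]
  rw [M✶.restrict_restrict_eq diff_subset, diff_diff]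

/-- The key characterisation of independence in a contraction. -/
lemma mcontractSet_indep_iff {M : Matroid α} [M.Finite] {S : Set α} (hS : S ⊆ M.E)
    {I : Set α} :
    (mcontractSet M S).Indep I ↔ I ⊆ M.E \ S ∧ nrk M (I ∪ S) = I.ncard + nrk M S := by
  haveI : M✶.Finite := ⟨M.ground_finite⟩
  set R : Set α := M.E \ S with hR
  have hRE : R ⊆ M.E := diff_subset
  constructor
  · -- forward direction
    intro hI
    rw [mcontractSet, dual_indep_iff_exists'] at hI
    obtain ⟨hIR, B, hB, hIB⟩ := hI
    rw [restrict_ground_eq] at hIR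
    rw [isBase_restrict_iff'] at hB
    have hBE : B ⊆ M.E := hB.indep.subset_ground
    have hBco := hB.indep
    rw [dual_indep_iff_exists'] at hBco
    obtain ⟨-, B0, hB0, hBB0⟩ := hBco
    -- every base of M disjoint from B contains R \ B
    have hkey : ∀ B1, M.IsBase B1 → Disjoint B B1 → R \ B ⊆ B1 := by
      intro B1 hB1 hBB1 x hx
      by_contra hxB1
      have hxind : M✶.Indep (insert x B) := by
        rw [dual_indep_iff_exists']
        refine ⟨insert_subset (hRE hx.1) hBE, B1, hB1, ?_⟩
        refine Set.disjoint_left.2 fun a ha hab => ?_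
        rcases mem_insert_iff.1 ha with rfl | haB
        · exact hxB1 hab
        · exact (Set.disjoint_left.1 hBB1) haB hab
      exact hB.insert_not_indep hx hxind
    have hRBB0 : R \ B ⊆ B0 := hkey B0 hB0 hBB0
    have hIB0 : I ⊆ B0 := fun x hx => hRBB0 ⟨hIR hx, (Set.disjoint_left.1 hIB) hx⟩
    -- B0 ∩ S spans S
    have hspan : S ⊆ M.closure (B0 ∩ S) := by
      intro s hs
      by_cases hsB0 : s ∈ B0
      · exact M.subset_closure (B0 ∩ S) (inter_subset_left.trans hB0.indep.subset_ground)
          ⟨hsB0, hs⟩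
      by_contra hscl
      have hsE : s ∈ M.E := hS hs
      have hscl0 : s ∈ M.closure B0 := by rw [hB0.closure_eq]; exact hsE
      obtain ⟨Z, hZ, hsZ, hZsub⟩ := exists_circ_of_mem_closure hscl0 hsB0
      have hex : ∃ x ∈ Z, x ≠ s ∧ x ∉ S := by
        by_contra hno
        push_neg at hno
        have hZd : Z \ {s} ⊆ B0 ∩ S := by
          intro z hz
          have hzB0 : z ∈ B0 := ((hZsub hz.1).resolve_left hz.2)
          exact ⟨hzB0, hno z hz.1 hz.2⟩
        exact hscl (M.closure_subset_closure hZd (circ_nrk_diff hZ hsZ))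
      obtain ⟨x, hxZ, hxs, hxS⟩ := hex
      have hxB0 : x ∈ B0 := (hZsub hxZ).resolve_left hxs
      have hBd : M.Indep (B0 \ {x}) := hB0.indep.subset diff_subset
      -- exchange: insert s (B0 \ {x}) is a base
      have hind : M.Indep (insert s (B0 \ {x})) := by
        by_contra hdep
        have hiff := hBd.insert_indep_iff_of_notMem (fun h => hsB0 h.1)
        have hscl2 : s ∈ M.closure (B0 \ {x}) := by
          by_contra hh
          exact hdep (hiff.2 ⟨hsE, hh⟩)
        have hZsub2 : Z \ {x} ⊆ M.closure (B0 \ {x}) := by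
          intro z hz
          rcases eq_or_ne z s with rfl | hzs
          · exact hscl2
          · refine M.subset_closure (B0 \ {x}) (diff_subset.trans hB0.indep.subset_ground) ?_
            exact ⟨(hZsub hz.1).resolve_left hzs, hz.2⟩
        have hxcl : x ∈ M.closure (B0 \ {x}) :=
          M.closure_subset_closure_of_subset_closure hZsub2 (circ_nrk_diff hZ hxZ)
        have hB0i : M.Indep (insert x (B0 \ {x})) := by
          rw [insert_diff_singleton, insert_eq_of_mem hxB0]
          exact hB0.indep
        have := (hBd.insert_indep_iff_of_notMem (fun h => h.2 rfl)).1 hB0i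
        exact this.2 hxcl
      have hB0' : M.IsBase (insert s (B0 \ {x})) :=
        hB0.exchange_isBase_of_indep hsB0 hind
      have hdisj : Disjoint B (insert s (B0 \ {x})) := by
        refine Set.disjoint_right.2 fun a ha hab => ?_
        rcases mem_insert_iff.1 ha with rfl | h
        · exact (hB.subset hab).2 hs
        · exact (Set.disjoint_left.1 hBB0) hab h.1
      have hxmem := hkey _ hB0' hdisj
        ⟨⟨hB0.indep.subset_ground hxB0, hxS⟩,
          fun hxB => (Set.disjoint_left.1 hBB0) hxB hxB0⟩
      rcases mem_insert_iff.1 hxmem with h | h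
      · exact hxs h
      · exact h.2 rfl
    -- conclude the rank equation
    refine ⟨hIR, ?_⟩
    have hJ : nrk M S = (B0 ∩ S).ncard := by
      refine le_antisymm ?_ (ncard_le_nrk (hB0.indep.subset inter_subset_left) inter_subset_right)
      exact nrk_le_of_subset_closure hspan |>.trans_eq
        (nrk_indep (hB0.indep.subset inter_subset_left))
    refine le_antisymm ?_ ?_
    · have h1 := nrk_submod M I S
      have h2 : nrk M I ≤ I.ncard := nrk_le_ncard I (M.set_finite I (hIR.trans hRE))
      omega
    · have hind : M.Indep (I ∪ (B0 ∩ S)) :=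
        hB0.indep.subset (union_subset hIB0 inter_subset_left)
      have hsub : I ∪ (B0 ∩ S) ⊆ I ∪ S := union_subset_union_right I inter_subset_right
      have hcard := ncard_le_nrk hind hsub
      have hdisj : Disjoint I (B0 ∩ S) :=
        Set.disjoint_left.2 fun x hx hx2 => (hIR hx).2 hx2.2
      rw [ncard_union_eq hdisj (M.set_finite I (hIR.trans hRE))
        (M.set_finite _ (inter_subset_left.trans hB0.indep.subset_ground))] at hcard
      omega
  · -- backward direction
    rintro ⟨hIR, hr⟩
    obtain ⟨J, hJbas⟩ := M.exists_isBasis' S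
    have hScl : S ⊆ M.closure J := (hJbas.isBasis hS).subset_closure
    have hJcard : nrk M S = J.ncard := nrk_eq_of_basis' hJbas
    have hIfin : I.Finite := M.set_finite I (hIR.trans hRE)
    have hJfin : J.Finite := M.set_finite J hJbas.indep.subset_ground
    have hIJindep : M.Indep (I ∪ J) := by
      have h1 : nrk M (I ∪ J) = nrk M (I ∪ S) := by
        have h2 : nrk M (I ∪ J ∪ S) = nrk M (I ∪ J) := nrk_union_eq_of_subset_closure hScl
        rw [← h2]
        congr 1
        rw [union_assoc, union_eq_self_of_subset_left hJbas.subset]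
      have hdisj : Disjoint I J := Set.disjoint_left.2
        fun x hx hxJ => (hIR hx).2 (hJbas.subset hxJ)
      refine indep_of_nrk_eq_ncard (hIfin.union hJfin) ?_
      rw [h1, hr, ncard_union_eq hdisj hIfin hJfin, hJcard]
    obtain ⟨BM, hBM, hIJBM⟩ := hIJindep.exists_isBase_superset
    rw [mcontractSet, dual_indep_iff_exists', restrict_ground_eq]
    refine ⟨hIR, R \ BM, ?_, ?_⟩
    · rw [isBase_restrict_iff']
      have hco : M✶.Indep (R \ BM) := by
        rw [dual_indep_iff_exists']
        exact ⟨diff_subset.trans hRE, BM, hBM, disjoint_sdiff_left⟩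
      refine (Indep.isBasis_of_maximal_subset hco diff_subset ?_ hRE).isBasis'
      intro K hK hRBK hKR
      by_contra hKnsub
      obtain ⟨x, hxK, hxRB⟩ := not_subset.1 hKnsub
      have hxR : x ∈ R := hKR hxK
      have hxBM : x ∈ BM := by
        by_contra hxBM
        exact hxRB ⟨hxR, hxBM⟩
      have hxind : M✶.Indep (insert x (R \ BM)) :=
        hK.subset (insert_subset hxK hRBK)
      rw [dual_indep_iff_exists'] at hxind
      obtain ⟨-, B2, hB2, hB2disj⟩ := hxind
      have hsub2 : B2 ⊆ M.closure (BM \ {x}) := by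
        intro b hb
        have hbE : b ∈ M.E := hB2.indep.subset_ground hb
        have hbni : b ∉ insert x (R \ BM) := (Set.disjoint_right.1 hB2disj) hb
        rw [mem_insert_iff] at hbni
        push_neg at hbni
        by_cases hbS : b ∈ S
        · have hJsub : J ⊆ BM \ {x} := by
            refine subset_diff_singleton ((subset_union_right).trans hIJBM) ?_
            intro hxJ
            exact hxR.2 (hJbas.subset hxJ)
          exact M.closure_subset_closure hJsub (hScl hbS)
        · have hbR : b ∈ R := ⟨hbE, hbS⟩
          have hbBM : b ∈ BM := by
            by_contra hbBM
            exact hbni.2 ⟨hbR, hbBM⟩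
          refine M.subset_closure (BM \ {x}) (diff_subset.trans hBM.indep.subset_ground) ?_
          exact ⟨hbBM, hbni.1⟩
      have hEcl : M.E ⊆ M.closure (BM \ {x}) := by
        have h1 : M.E = M.closure B2 := (hB2.closure_eq).symm
        rw [h1]
        exact M.closure_subset_closure_of_subset_closure hsub2
      have hxcl : x ∈ M.closure (BM \ {x}) := hEcl (hBM.indep.subset_ground hxBM)
      have hBMi : M.Indep (insert x (BM \ {x})) := by
        rw [insert_diff_singleton, insert_eq_of_mem hxBM]
        exact hBM.indep
      have hxni : x ∉ BM \ {x} := fun h => h.2 (Set.mem_singleton x)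
      have := ((hBM.indep.subset diff_subset).insert_indep_iff_of_notMem hxni).1 hBMi
      exact this.2 hxcl
    · exact Set.disjoint_left.2 fun a haI haR => haR.2 (hIJBM (Or.inl haI))


/-! ### Rank calculus and circuits in contractions -/

lemma nrk_union_le_ncard_add {M : Matroid α} [M.Finite] {X : Set α} (Y : Set α)
    (hfin : X.Finite) : nrk M (X ∪ Y) ≤ X.ncard + nrk M Y := by
  have h1 := nrk_submod M X Y
  have h2 : nrk M X ≤ X.ncard := nrk_le_ncard X hfin
  omega

lemma nrk_insert_le {M : Matroid α} [M.Finite] (x : α) (Y : Set α) :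
    nrk M (insert x Y) ≤ nrk M Y + 1 := by
  have h1 : insert x Y = {x} ∪ Y := by rw [singleton_union]
  rw [h1]
  have h2 := nrk_union_le_ncard_add (M := M) Y (finite_singleton x)
  have h3 : ({x} : Set α).ncard = 1 := ncard_singleton x
  omega

lemma mem_closure_of_nrk_insert_le {M : Matroid α} [M.Finite] {x : α} {Y : Set α}
    (hx : x ∈ M.E) (h : nrk M (insert x Y) ≤ nrk M Y) : x ∈ M.closure Y := by
  by_contra hcl
  obtain ⟨J, hJ⟩ := M.exists_isBasis' Y
  have hxJ : x ∉ M.closure J := by rwa [hJ.closure_eq_closure]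
  have hxJ' : x ∉ J := fun hh => hxJ (M.mem_closure_of_mem' hh)
  have hind : M.Indep (insert x J) := by
    rw [(hJ.indep.insert_indep_iff_of_notMem hxJ')]
    exact ⟨hx, hxJ⟩
  have hle := ncard_le_nrk hind (insert_subset_insert hJ.subset)
  rw [ncard_insert_of_notMem hxJ' (M.set_finite J hJ.indep.subset_ground)] at hle
  rw [← nrk_eq_of_basis' hJ] at hle
  omega

lemma nrk_insert_eq_of_mem_closure {M : Matroid α} [M.Finite] {x : α} {Y : Set α}
    (h : x ∈ M.closure Y) : nrk M (insert x Y) = nrk M Y := by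
  refine le_antisymm ?_ (nrk_mono (subset_insert x Y))
  have h1 : insert x Y ⊆ Y ∪ M.closure Y := by
    intro a ha
    rcases mem_insert_iff.1 ha with rfl | ha
    · exact Or.inr h
    · exact Or.inl ha
  calc nrk M (insert x Y) ≤ nrk M (Y ∪ M.closure Y) := nrk_mono h1
    _ = nrk M (Y ∪ Y) := nrk_union_closure_right M Y Y
    _ = nrk M Y := by rw [union_self]

/-- rank formula for contractions -/
lemma nrk_mcontractSet {M : Matroid α} [M.Finite] {S : Set α} (hS : S ⊆ M.E)
    {X : Set α} (hX : X ⊆ M.E \ S) :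
    nrk M (X ∪ S) = nrk (mcontractSet M S) X + nrk M S := by
  obtain ⟨I, hI⟩ := (mcontractSet M S).exists_isBasis' X
  have hIind := hI.indep
  rw [mcontractSet_indep_iff hS] at hIind
  obtain ⟨hIE, hIr⟩ := hIind
  rw [nrk_eq_of_basis' hI]
  have hbase : I ∪ S ⊆ M.E := union_subset (hIE.trans diff_subset) hS
  have hsub0 : I ∪ S ⊆ M.closure (I ∪ S) := M.subset_closure _ hbase
  have hIfin : I.Finite := M.set_finite I (hIE.trans diff_subset)
  have hcl : X ∪ S ⊆ M.closure (I ∪ S) := by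
    refine union_subset (fun x hx => ?_) (fun s hs => hsub0 (Or.inr hs))
    by_cases hxI : x ∈ I
    · exact hsub0 (Or.inl hxI)
    have hnind : ¬ (mcontractSet M S).Indep (insert x I) :=
      hI.insert_not_indep ⟨hx, hxI⟩
    rw [mcontractSet_indep_iff hS] at hnind
    push_neg at hnind
    have hxE : x ∈ M.E := (hX hx).1
    have hins : insert x I ⊆ M.E \ S := insert_subset (hX hx) hIE
    have hne := hnind hins
    have heq : insert x I ∪ S = insert x (I ∪ S) := by rw [insert_union]
    have h1 : nrk M (insert x (I ∪ S)) ≤ nrk M (I ∪ S) + 1 := nrk_insert_le x (I ∪ S)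
    have h2 : (insert x I).ncard = I.ncard + 1 := ncard_insert_of_notMem hxI hIfin
    have h3 : nrk M (I ∪ S) ≤ nrk M (insert x (I ∪ S)) := nrk_mono (subset_insert _ _)
    rw [heq] at hne
    have h4 : nrk M (insert x (I ∪ S)) ≤ nrk M (I ∪ S) := by omega
    exact mem_closure_of_nrk_insert_le hxE h4
  have h5 : nrk M (X ∪ S) = nrk M (I ∪ S) :=
    le_antisymm (nrk_le_of_subset_closure hcl)
      (nrk_mono (union_subset_union_left S hI.subset))
  rw [h5, hIr]


/-! ### Circuits in contractions -/

lemma indep_of_mcontractSet_indep {M : Matroid α} [M.Finite] {S X : Set α} (hS : S ⊆ M.E)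
    (h : (mcontractSet M S).Indep X) : M.Indep X := by
  rw [mcontractSet_indep_iff hS] at h
  obtain ⟨hXE, hr⟩ := h
  have hXfin : X.Finite := M.set_finite X (hXE.trans diff_subset)
  by_contra hdep
  have hd : M.Dep X := ⟨hdep, hXE.trans diff_subset⟩
  rw [dep_iff_nrk_lt (hXE.trans diff_subset)] at hd
  have h1 := nrk_union_le_ncard_add (M := M) S hXfin
  have h2 := nrk_submod M X S
  omega

lemma mcontractSet_dep_of_dep {M : Matroid α} [M.Finite] {S X : Set α} (hS : S ⊆ M.E)
    (hXE : X ⊆ M.E \ S) (h : M.Dep X) : (mcontractSet M S).Dep X := by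
  refine ⟨fun hind => ?_, by rw [mcontractSet_ground]; exact hXE⟩
  exact h.not_indep (indep_of_mcontractSet_indep hS hind)

/-- a circuit of `M / S` comes from a circuit of `M` -/
lemma circ_mcontractSet_lift {M : Matroid α} [M.Finite] {S Z : Set α} (hS : S ⊆ M.E)
    (hZ : IsCircuitM (mcontractSet M S) Z) :
    ∃ F, IsCircuitM M F ∧ F \ S = Z ∧ F ⊆ Z ∪ S := by
  have hZE : Z ⊆ M.E \ S := hZ.1.subset_ground
  have hZfin : Z.Finite := M.set_finite Z (hZE.trans diff_subset)
  obtain ⟨J, hJ⟩ := M.exists_isBasis' S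
  have hJfin : J.Finite := M.set_finite J hJ.indep.subset_ground
  haveI := mcontractSet_finite M S
  have hZdep := hZ.1
  rw [dep_iff_nrk_lt (X := Z) (by rw [mcontractSet_ground]; exact hZE)] at hZdep
  have hrk : nrk M (Z ∪ S) = nrk (mcontractSet M S) Z + nrk M S := nrk_mcontractSet hS hZE
  have hJcard : nrk M S = J.ncard := nrk_eq_of_basis' hJ
  -- Z ∪ J is dependent in M
  have hZJdep : M.Dep (Z ∪ J) := by
    rw [dep_iff_nrk_lt (union_subset (hZE.trans diff_subset) hJ.indep.subset_ground)]
    have h1 : nrk M (Z ∪ J) ≤ nrk M (Z ∪ S) := nrk_mono (union_subset_union_right Z hJ.subset)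
    have hdisj : Disjoint Z J := Set.disjoint_left.2 fun a ha haJ => (hZE ha).2 (hJ.subset haJ)
    rw [ncard_union_eq hdisj hZfin hJfin]
    omega
  obtain ⟨F, hFsub, hF⟩ := exists_circ_of_dep hZJdep
  have hFS : F \ S ⊆ Z := by
    intro a ha
    rcases hFsub ha.1 with h | h
    · exact h
    · exact absurd (hJ.subset h) ha.2
  have hFSne : (F \ S).Nonempty := by
    rw [nonempty_iff_ne_empty]
    intro hemp
    have hFJ : F ⊆ J := by
      intro a ha
      rcases hFsub ha with h | h
      · have hmem : a ∈ F \ S := ⟨ha, (hZE h).2⟩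
        rw [hemp] at hmem
        exact absurd hmem (notMem_empty a)
      · exact h
    exact circ_not_subset_indep hF hJ.indep hFJ
  -- F \ S is dependent in M / S
  have hFSdep : (mcontractSet M S).Dep (F \ S) := by
    refine ⟨fun hind => ?_, by rw [mcontractSet_ground]; exact diff_subset_diff_left (circ_subset_ground hF)⟩
    rw [mcontractSet_indep_iff hS] at hind
    obtain ⟨-, hind⟩ := hind
    have h1 : F \ S ∪ S = F ∪ S := by rw [diff_union_self]
    rw [h1] at hind
    have h2 : nrk M (F ∪ S) + nrk M (F ∩ S) ≤ nrk M F + nrk M S := nrk_submod M F S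
    have h3 : nrk M F + 1 = F.ncard := (circ_ncard_eq_nrk_add_one hF).symm
    have h4 : nrk M (F ∩ S) = (F ∩ S).ncard := by
      have hssub : F ∩ S ⊂ F := by
        refine ssubset_of_subset_of_ne inter_subset_left fun hFS2 => ?_
        obtain ⟨a, ha⟩ := hFSne
        have ha2 : a ∈ F ∩ S := by rw [hFS2]; exact ha.1
        exact ha.2 ha2.2
      rw [nrk_indep (hF.2 (F ∩ S) hssub)]
    have h5 : (F \ S).ncard + (F ∩ S).ncard = F.ncard := by
      rw [← ncard_union_eq disjoint_sdiff_inter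
        ((circ_finite hF).subset diff_subset) ((circ_finite hF).subset inter_subset_left),
        diff_union_inter]
    omega
  have hZeq : F \ S = Z := by
    by_contra hne
    exact hFSdep.not_indep (hZ.2 (F \ S) (ssubset_of_subset_of_ne hFS hne))
  refine ⟨F, hF, hZeq, ?_⟩
  intro a ha
  by_cases haS : a ∈ S
  · exact Or.inr haS
  · exact Or.inl (hZeq ▸ ⟨ha, haS⟩)

/-- contracting part of a circuit leaves a circuit -/
lemma circ_mcontractSet_of_subset {M : Matroid α} [M.Finite] {C S : Set α}
    (hC : IsCircuitM M C) (hS : S ⊂ C) :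
    IsCircuitM (mcontractSet M S) (C \ S) := by
  have hSE : S ⊆ M.E := hS.subset.trans (circ_subset_ground hC)
  have hSind : M.Indep S := hC.2 S hS
  have hCfin := circ_finite hC
  have hnrkS : nrk M S = S.ncard := nrk_indep hSind
  have hCS : C \ S ⊆ M.E \ S := diff_subset_diff_left (circ_subset_ground hC)
  have hdsne : (C \ S).Nonempty := nonempty_of_ssubset hS
  constructor
  · refine ⟨fun hind => ?_, by rw [mcontractSet_ground]; exact hCS⟩
    rw [mcontractSet_indep_iff hSE] at hind
    obtain ⟨-, hind⟩ := hind
    rw [diff_union_self, union_eq_self_of_subset_right hS.subset] at hind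
    have h3 : nrk M C + 1 = C.ncard := (circ_ncard_eq_nrk_add_one hC).symm
    have h5 : (C \ S).ncard + S.ncard = C.ncard := by
      rw [← ncard_union_eq disjoint_sdiff_left (hCfin.subset diff_subset)
        (hCfin.subset hS.subset), diff_union_self, union_eq_self_of_subset_right hS.subset]
    omega
  · intro D hD
    have hDE : D ⊆ M.E \ S := hD.subset.trans hCS
    rw [mcontractSet_indep_iff hSE]
    refine ⟨hDE, ?_⟩
    have hDS : D ∪ S ⊂ C := by
      obtain ⟨x, hxCS, hxD⟩ := exists_of_ssubset hD
      refine ssubset_of_subset_of_ne (union_subset (hD.subset.trans diff_subset) hS.subset) ?_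
      intro heq
      have : x ∈ D ∪ S := heq ▸ hxCS.1
      rcases this with h | h
      · exact hxD h
      · exact hxCS.2 h
    have hind : M.Indep (D ∪ S) := hC.2 _ hDS
    rw [nrk_indep hind, hnrkS, ncard_union_eq
      (Set.disjoint_left.2 fun a ha haS => (hDE ha).2 haS)
      (hCfin.subset (hD.subset.trans diff_subset)) (hCfin.subset hS.subset)]

lemma circ_mcontractSet_ncard_le {M : Matroid α} [M.Finite] {S Z : Set α} (hS : S ⊆ M.E)
    (hZ : IsCircuitM (mcontractSet M S) Z) {c : ℕ}
    (hc : ∀ F, IsCircuitM M F → F.ncard ≤ c) : Z.ncard ≤ c := by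
  obtain ⟨F, hF, hFS, -⟩ := circ_mcontractSet_lift hS hZ
  calc Z.ncard = (F \ S).ncard := by rw [hFS]
    _ ≤ F.ncard := ncard_le_ncard diff_subset (circ_finite hF)
    _ ≤ c := hc F hF

/-- for a loop `e`, the circuits of `M/e` are the circuits of `M` avoiding `e`. -/
lemma circ_mcontract_loop_iff {M : Matroid α} [M.Finite] {e : α} (he : IsCircuitM M {e})
    {Z : Set α} (hZe : e ∉ Z) :
    (IsCircuitM (mcontractSet M {e}) Z ↔ IsCircuitM M Z) := by
  have heE : ({e} : Set α) ⊆ M.E := circ_subset_ground he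
  have hecl : ∀ X : Set α, e ∈ M.closure X := by
    intro X
    have h1 : e ∈ M.closure (∅ : Set α) := by
      have := circ_nrk_diff he (mem_singleton e)
      simpa using this
    exact M.closure_subset_closure (empty_subset X) h1
  have hind : ∀ X : Set α, X ⊆ M.E \ {e} →
      ((mcontractSet M {e}).Indep X ↔ M.Indep X) := by
    intro X hXE
    rw [mcontractSet_indep_iff heE]
    have h1 : nrk M (X ∪ {e}) = nrk M X := by
      rw [union_singleton, nrk_insert_eq_of_mem_closure (hecl X)]
    have h2 : nrk M ({e} : Set α) = 0 := by
      have h4 : ({e} : Set α) = insert e (∅ : Set α) := by simp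
      rw [h4, nrk_insert_eq_of_mem_closure (hecl ∅), nrk_indep M.empty_indep, ncard_empty]
    rw [h1, h2, add_zero]
    constructor
    · rintro ⟨-, hr⟩
      exact indep_of_nrk_eq_ncard (M.set_finite X (hXE.trans diff_subset)) hr
    · intro hXi
      exact ⟨hXE, nrk_indep hXi⟩
  constructor
  · rintro ⟨hdep, hmin⟩
    have hZE' : Z ⊆ M.E \ {e} := hdep.subset_ground
    refine ⟨⟨fun hi => hdep.not_indep ((hind Z hZE').2 hi), hZE'.trans diff_subset⟩, ?_⟩
    intro D hD
    have := hmin D hD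
    exact ((hind D (hD.subset.trans hZE')).1 this)
  · rintro ⟨hdep, hmin⟩
    have hZE' : Z ⊆ M.E \ {e} := subset_diff_singleton hdep.subset_ground hZe
    refine ⟨⟨fun hi => hdep.not_indep ((hind Z hZE').1 hi), by
      rw [mcontractSet_ground]; exact hZE'⟩, ?_⟩
    intro D hD
    exact (hind D (hD.subset.trans hZE')).2 (hmin D hD)


/-! ### The halving lemma and the lower bound -/

lemma halving {M : Matroid α} [M.Finite] {Z : Set α} {e : α} (hZ : IsCircuitM M Z)
    (he : e ∈ M.E) (h2 : 2 ≤ Z.ncard) :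
    ∃ Z', IsCircuitM (mcontract M e) Z' ∧ Z.ncard ≤ 2 * Z'.ncard := by
  rw [mcontract_eq_mcontractSet]
  haveI := mcontractSet_finite M {e}
  have heE : ({e} : Set α) ⊆ M.E := singleton_subset_iff.2 he
  have hZfin := circ_finite hZ
  by_cases heZ : e ∈ Z
  · -- contract an element of the circuit
    have hss : {e} ⊂ Z := by
      refine ssubset_of_subset_of_ne (singleton_subset_iff.2 heZ) fun hEq => ?_
      rw [← hEq, ncard_singleton] at h2
      omega
    refine ⟨Z \ {e}, circ_mcontractSet_of_subset hZ hss, ?_⟩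
    rw [ncard_sdiff_singleton_of_mem heZ]
    omega
  by_cases hloop : M.Indep {e}
  swap
  · -- e is a loop
    have hec : IsCircuitM M {e} := by
      refine ⟨⟨hloop, heE⟩, fun D hD => ?_⟩
      rw [ssubset_singleton_iff.1 hD]
      exact M.empty_indep
    exact ⟨Z, (circ_mcontract_loop_iff hec heZ).2 hZ, by omega⟩
  -- e is not a loop, e ∉ Z
  have hZE : Z ⊆ M.E \ {e} :=
    subset_diff_singleton (circ_subset_ground hZ) heZ
  have hZdep : (mcontractSet M {e}).Dep Z := mcontractSet_dep_of_dep heE hZE hZ.1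
  obtain ⟨D, hDZ, hD⟩ := exists_circ_of_dep hZdep
  rcases eq_or_ssubset_of_subset hDZ with rfl | hDss
  · exact ⟨D, hD, by omega⟩
  -- D is a proper subcircuit; lift to F = insert e D
  have liftF : ∀ D' : Set α, IsCircuitM (mcontractSet M {e}) D' → D' ⊂ Z →
      IsCircuitM M (insert e D') ∧ e ∈ M.closure D' := by
    intro D' hD' hss
    obtain ⟨F, hF, hFe, hFsub⟩ := circ_mcontractSet_lift heE hD'
    have hFne : F ≠ D' := by
      intro hEq
      exact (hZ.2 D' hss).not_dep (hEq ▸ hF.1)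
    have heF : e ∈ F := by
      by_contra heF
      refine hFne ?_
      rw [← hFe]
      exact (diff_singleton_eq_self heF).symm
    have hFeq : F = insert e D' := by
      apply Subset.antisymm
      · intro a ha
        rcases hFsub ha with h | h
        · exact mem_insert_of_mem e h
        · rw [mem_singleton_iff.1 h]; exact mem_insert e _
      · rw [← hFe]
        exact insert_subset heF diff_subset
    constructor
    · rw [← hFeq]; exact hF
    · have := circ_nrk_diff hF heF
      rw [hFeq] at this
      rwa [insert_diff_self_of_notMem (fun hc => (hss.subset.trans hZE hc).2 rfl)] at this
  obtain ⟨hFcirc, hecl⟩ := liftF D hD hDss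
  obtain ⟨x, hxD⟩ := circ_nonempty hD
  have hxZ : x ∈ Z := hDss.subset hxD
  -- Z \ {x} is dependent in the contraction
  have hZr : nrk (mcontractSet M {e}) Z + 1 + 1 = Z.ncard := by
    have h1 : nrk M (Z ∪ {e}) = nrk (mcontractSet M {e}) Z + nrk M {e} :=
      nrk_mcontractSet heE hZE
    have h2' : nrk M ({e} : Set α) = 1 := by rw [nrk_indep hloop, ncard_singleton]
    have h3 : nrk M (Z ∪ {e}) = nrk M Z := by
      rw [union_singleton]
      exact nrk_insert_eq_of_mem_closure
        (M.closure_subset_closure hDss.subset hecl)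
    have h4 : Z.ncard = nrk M Z + 1 := circ_ncard_eq_nrk_add_one hZ
    omega
  have hZxdep : (mcontractSet M {e}).Dep (Z \ {x}) := by
    rw [dep_iff_nrk_lt (X := Z \ {x}) (by rw [mcontractSet_ground]; exact diff_subset.trans hZE)]
    have h1 : nrk (mcontractSet M {e}) (Z \ {x}) ≤ nrk (mcontractSet M {e}) Z :=
      nrk_mono diff_subset
    rw [ncard_sdiff_singleton_of_mem hxZ]
    omega
  obtain ⟨D2, hD2sub, hD2⟩ := exists_circ_of_dep hZxdep
  have hxD2 : x ∉ D2 := fun hc => (hD2sub hc).2 rfl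
  have hD2ss : D2 ⊂ Z := ssubset_of_subset_of_ne (hD2sub.trans diff_subset)
    (fun hEq => hxD2 (by rw [hEq]; exact hxZ))
  obtain ⟨hF2circ, hecl2⟩ := liftF D2 hD2 hD2ss
  have hDfin : D.Finite := hZfin.subset hDss.subset
  have hD2fin : D2.Finite := hZfin.subset hD2ss.subset
  have heD : e ∉ D := fun hc => heZ (hDss.subset hc)
  have heD2 : e ∉ D2 := fun hc => heZ (hD2ss.subset hc)
  -- D ∪ D2 = Z by a submodularity argument
  have hUnion : D ∪ D2 = Z := by
    by_contra hne
    have hss : D ∪ D2 ⊂ Z :=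
      ssubset_of_subset_of_ne (union_subset hDss.subset hD2ss.subset) hne
    have hUind : M.Indep (D ∪ D2) := hZ.2 _ hss
    have hAB : insert e D ∪ insert e D2 = insert e (D ∪ D2) := by
      ext a; simp only [mem_insert_iff, mem_union]; tauto
    have hABi : insert e D ∩ insert e D2 = insert e (D ∩ D2) := by
      ext a; simp only [mem_insert_iff, mem_inter_iff, mem_union]; tauto
    have hsm := nrk_submod M (insert e D) (insert e D2)
    rw [hAB, hABi] at hsm
    have h1 : nrk M (insert e (D ∪ D2)) = (D ∪ D2).ncard := by
      rw [nrk_insert_eq_of_mem_closure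
        (M.closure_subset_closure subset_union_left hecl), nrk_indep hUind]
    have h2' : nrk M (insert e (D ∩ D2)) = (D ∩ D2).ncard + 1 := by
      have hssF : insert e (D ∩ D2) ⊂ insert e D := by
        refine ssubset_of_subset_of_ne
          (insert_subset_insert inter_subset_left) fun hEq => ?_
        have hxmem : x ∈ insert e (D ∩ D2) := by rw [hEq]; exact mem_insert_of_mem e hxD
        rcases mem_insert_iff.1 hxmem with h | h
        · exact heZ (h ▸ hxZ)
        · exact hxD2 h.2
      rw [nrk_indep (hFcirc.2 _ hssF), ncard_insert_of_notMem
        (fun hc => heD (inter_subset_left hc)) (hDfin.subset inter_subset_left)]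
    have h3 : nrk M (insert e D) + 1 = (insert e D).ncard := by
      rw [← circ_ncard_eq_nrk_add_one hFcirc]
    have h4 : nrk M (insert e D2) + 1 = (insert e D2).ncard := by
      rw [← circ_ncard_eq_nrk_add_one hF2circ]
    have h5 : (insert e D).ncard = D.ncard + 1 := ncard_insert_of_notMem heD hDfin
    have h6 : (insert e D2).ncard = D2.ncard + 1 := ncard_insert_of_notMem heD2 hD2fin
    have h7 := ncard_union_add_ncard_inter D D2 hDfin hD2fin
    omega
  have hcard : Z.ncard ≤ D.ncard + D2.ncard := by
    rw [← hUnion]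
    exact ncard_union_le D D2
  rcases le_total D.ncard D2.ncard with h | h
  · exact ⟨D2, hD2, by omega⟩
  · exact ⟨D, hD, by omega⟩
  


/-! ### Lower bound: circuits are at most `2 ^ d` for `CdLE M d` -/

lemma cdle_circ_bound {M : Matroid α} {d : ℕ} (h : CdLE M d) :
    M.Finite → ∀ Z, IsCircuitM M Z → Z.ncard ≤ 2 ^ d := by
  induction h with
  | empty M d hE =>
    intro hfin Z hZ
    exfalso
    obtain ⟨x, hx⟩ := circ_nonempty hZ
    exact (hE ▸ circ_subset_ground hZ hx : x ∈ (∅ : Set α))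
  | single M d e hE =>
    intro hfin Z hZ
    have h1 : Z ⊆ {e} := hE ▸ circ_subset_ground hZ
    calc Z.ncard ≤ ({e} : Set α).ncard := ncard_le_ncard h1 (finite_singleton e)
      _ = 1 := ncard_singleton e
      _ ≤ 2 ^ (d + 1) := Nat.one_le_two_pow
  | comp M d hconn hcomp ih =>
    intro hfin Z hZ
    haveI : M.Finite := hfin
    obtain ⟨x, hx⟩ := circ_nonempty hZ
    have hxE : x ∈ M.E := circ_subset_ground hZ hx
    have hZcomp : Z ⊆ compOf M x := fun y hy => connTo_of_mem_circ hZ hx hy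
    have hZ' : IsCircuitM (M ↾ compOf M x) Z :=
      (circ_restrict_iff (compOf_subset_ground M x)).2 ⟨hZ, hZcomp⟩
    exact ih x hxE (restrict_finite (M.ground_finite.subset (compOf_subset_ground M x))) Z hZ'
  | contr M d e hconn he hC ih =>
    intro hfin Z hZ
    haveI : M.Finite := hfin
    have hfin' : (mcontract M e).Finite := by
      rw [mcontract_eq_mcontractSet]; exact mcontractSet_finite M {e}
    by_cases h2 : Z.ncard ≤ 2
    · have : 2 ≤ 2 ^ (d + 1) := by
        have : (0:ℕ) < 2 ^ d := Nat.pow_pos (n := d) (by norm_num)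
        rw [pow_succ]
        omega
      omega
    · obtain ⟨Z', hZ', hcard⟩ := halving hZ he (by omega)
      have := ih hfin' Z' hZ'
      have h3 : 2 ^ (d+1) = 2 * 2 ^ d := by rw [pow_succ]; ring
      omega


/-! ### Skewness -/

lemma nrk_union_closure_left (M : Matroid α) (X Y : Set α) :
    nrk M (M.closure X ∪ Y) = nrk M (X ∪ Y) := by
  rw [← nrk_closure M (M.closure X ∪ Y), closure_union_closure_left_eq, nrk_closure]

lemma nrk_insert_of_not_mem_closure {M : Matroid α} [M.Finite] {x : α} {Y : Set α}
    (hx : x ∈ M.E) (h : x ∉ M.closure Y) : nrk M (insert x Y) = nrk M Y + 1 := by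
  refine le_antisymm (nrk_insert_le x Y) ?_
  obtain ⟨J, hJ⟩ := M.exists_isBasis' Y
  have hxJ : x ∉ M.closure J := by rwa [hJ.closure_eq_closure]
  have hxJ' : x ∉ J := fun hh => hxJ (M.mem_closure_of_mem' hh)
  have hind : M.Indep (insert x J) := by
    rw [hJ.indep.insert_indep_iff_of_notMem hxJ']
    exact ⟨hx, hxJ⟩
  have hle := ncard_le_nrk hind (insert_subset_insert hJ.subset)
  rw [ncard_insert_of_notMem hxJ' (M.set_finite J hJ.indep.subset_ground),
    ← nrk_eq_of_basis' hJ] at hle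
  exact hle

/-- monotonicity of local connectivity, in inequality form -/
lemma nrk_local_conn_mono {M : Matroid α} [M.Finite] {X' X : Set α} (h : X' ⊆ X) (Y : Set α) :
    nrk M X' + nrk M (X ∪ Y) ≤ nrk M X + nrk M (X' ∪ Y) := by
  have hsm := nrk_submod M X (X' ∪ Y)
  have h1 : X ∪ (X' ∪ Y) = X ∪ Y := by
    rw [← union_assoc, union_eq_self_of_subset_right h]
  have h2 : nrk M X' ≤ nrk M (X ∩ (X' ∪ Y)) :=
    nrk_mono (subset_inter h subset_union_left)
  rw [h1] at hsm
  omega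

/-- ranks add for subsets of the closures of two skew sets -/
lemma nrk_add_of_skew {M : Matroid α} [M.Finite] {C D X Y : Set α}
    (hskew : nrk M (C ∪ D) = nrk M C + nrk M D)
    (hX : X ⊆ M.closure C) (hY : Y ⊆ M.closure D) :
    nrk M (X ∪ Y) = nrk M X + nrk M Y := by
  have hXD : nrk M (X ∪ D) = nrk M X + nrk M D := by
    refine le_antisymm ?_ ?_
    · have := nrk_submod M X D
      have h2 : nrk M X ≤ nrk M X := le_rfl
      omega
    · have hm := nrk_local_conn_mono (M := M) hX D
      rw [nrk_union_closure_left, nrk_closure, hskew] at hm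
      omega
  refine le_antisymm ?_ ?_
  · have := nrk_submod M X Y
    omega
  · have hm := nrk_local_conn_mono (M := M) hY X
    rw [nrk_union_closure_left, nrk_closure, union_comm D X, hXD, union_comm Y X] at hm
    omega

lemma indep_union_of_skew {M : Matroid α} [M.Finite] {C D X Y : Set α}
    (hskew : nrk M (C ∪ D) = nrk M C + nrk M D)
    (hX : X ⊆ M.closure C) (hY : Y ⊆ M.closure D)
    (hXi : M.Indep X) (hYi : M.Indep Y) (hdisj : Disjoint X Y) : M.Indep (X ∪ Y) := by
  have h1 := nrk_add_of_skew hskew hX hY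
  rw [nrk_indep hXi, nrk_indep hYi] at h1
  refine indep_of_nrk_eq_ncard ((M.set_finite X hXi.subset_ground).union
    (M.set_finite Y hYi.subset_ground)) ?_
  rw [h1, ncard_union_eq hdisj (M.set_finite X hXi.subset_ground)
    (M.set_finite Y hYi.subset_ground)]

lemma not_skew_of_common {M : Matroid α} [M.Finite] {C D : Set α} {x : α}
    (hskew : nrk M (C ∪ D) = nrk M C + nrk M D)
    (hxC : x ∈ M.closure C) (hxD : x ∈ M.closure D) (hxCD : x ∉ C ∪ D)
    (hxi : M.Indep {x}) : False := by
  have hsm := nrk_submod M (insert x C) (insert x D)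
  have h1 : insert x C ∪ insert x D = insert x (C ∪ D) := by
    ext a; simp only [mem_insert_iff, mem_union]; tauto
  have h2 : insert x C ∩ insert x D = insert x (C ∩ D) := by
    ext a; simp only [mem_insert_iff, mem_inter_iff, mem_union]; tauto
  rw [h1, h2] at hsm
  have h3 : nrk M (insert x C) = nrk M C := nrk_insert_eq_of_mem_closure hxC
  have h4 : nrk M (insert x D) = nrk M D := nrk_insert_eq_of_mem_closure hxD
  have h5 : nrk M (C ∪ D) ≤ nrk M (insert x (C ∪ D)) := nrk_mono (subset_insert _ _)
  have h6 : nrk M ({x} : Set α) ≤ nrk M (insert x (C ∩ D)) := by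
    refine nrk_mono ?_
    intro a ha
    rw [mem_singleton_iff.1 ha]
    exact mem_insert x _
  have h7 : nrk M ({x} : Set α) = 1 := by rw [nrk_indep hxi, ncard_singleton]
  omega

/-- circuits inside the union of two disjoint skew circuits -/
lemma circ_in_skew_union {M : Matroid α} [M.Finite] {C D Y : Set α}
    (hC : IsCircuitM M C) (hD : IsCircuitM M D) (hdisj : Disjoint C D)
    (hskew : nrk M (C ∪ D) = nrk M C + nrk M D)
    (hY : IsCircuitM M Y) (hsub : Y ⊆ C ∪ D) : Y = C ∨ Y = D := by
  by_cases hYC : (Y ∩ C).Nonempty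
  · by_cases hYD : (Y ∩ D).Nonempty
    · exfalso
      obtain ⟨b, hb⟩ := hYD
      obtain ⟨a, ha⟩ := hYC
      have hC1 : Y ∩ C ⊂ Y := by
        refine ssubset_of_subset_of_ne inter_subset_left fun hEq => ?_
        have hmem : b ∈ Y ∩ C := by rw [hEq]; exact hb.1
        exact (Set.disjoint_left.1 hdisj) hmem.2 hb.2
      have hD1 : Y ∩ D ⊂ Y := by
        refine ssubset_of_subset_of_ne inter_subset_left fun hEq => ?_
        have hmem : a ∈ Y ∩ D := by rw [hEq]; exact ha.1
        exact (Set.disjoint_left.1 hdisj) ha.2 hmem.2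
      have hiC : M.Indep (Y ∩ C) := hY.2 _ hC1
      have hiD : M.Indep (Y ∩ D) := hY.2 _ hD1
      have hun : (Y ∩ C) ∪ (Y ∩ D) = Y := by
        ext x
        constructor
        · rintro (h | h) <;> exact h.1
        · intro hx
          rcases hsub hx with h | h
          · exact Or.inl ⟨hx, h⟩
          · exact Or.inr ⟨hx, h⟩
      have hind : M.Indep ((Y ∩ C) ∪ (Y ∩ D)) := by
        refine indep_union_of_skew hskew
          (inter_subset_right.trans (M.subset_closure C (circ_subset_ground hC)))
          (inter_subset_right.trans (M.subset_closure D (circ_subset_ground hD)))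
          hiC hiD (hdisj.mono inter_subset_right inter_subset_right)
      rw [hun] at hind
      exact hY.1.not_indep hind
    · rw [not_nonempty_iff_eq_empty] at hYD
      have : Y ⊆ C := fun a ha => (hsub ha).resolve_right
        (fun hD' => (eq_empty_iff_forall_notMem.1 hYD a) ⟨ha, hD'⟩)
      exact Or.inl (circ_eq_of_subset hC hY this)
  · rw [not_nonempty_iff_eq_empty] at hYC
    have : Y ⊆ D := fun a ha => (hsub ha).resolve_left
      (fun hC' => (eq_empty_iff_forall_notMem.1 hYC a) ⟨ha, hC'⟩)
    exact Or.inr (circ_eq_of_subset hD hY this)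


/-! ### Preservation lemmas for one-element contractions -/

lemma indep_singleton_of_mem_circ {M : Matroid α} [M.Finite] {G : Set α} {x y : α}
    (hG : IsCircuitM M G) (hx : x ∈ G) (hy : y ∈ G) (hxy : x ≠ y) : M.Indep {x} := by
  refine hG.2 {x} (ssubset_of_subset_of_ne (singleton_subset_iff.2 hx) fun hEq => ?_)
  rw [← hEq] at hy
  exact hxy (mem_singleton_iff.1 hy).symm

lemma circ_contract_of_not_mem_closure {M : Matroid α} [M.Finite] {C : Set α} {i : α}
    (hC : IsCircuitM M C) (hiE : i ∈ M.E) (hicl : i ∉ M.closure C)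
    (hinl : M.Indep {i}) : IsCircuitM (mcontractSet M {i}) C := by
  have hiC : i ∉ C := fun h => hicl (M.mem_closure_of_mem' h)
  have hCE : C ⊆ M.E \ {i} := subset_diff_singleton (circ_subset_ground hC) hiC
  have hiE' : ({i} : Set α) ⊆ M.E := singleton_subset_iff.2 hiE
  refine ⟨mcontractSet_dep_of_dep hiE' hCE hC.1, fun X hX => ?_⟩
  rw [mcontractSet_indep_iff hiE']
  have hXi : M.Indep X := hC.2 X (hX.trans_subset subset_rfl)
  have hXcl : i ∉ M.closure X := fun h => hicl (M.closure_subset_closure hX.subset h)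
  have hXiI : M.Indep (insert i X) := by
    rw [hXi.insert_indep_iff_of_notMem (fun h => hXcl (M.mem_closure_of_mem' h))]
    exact ⟨hiE, hXcl⟩
  refine ⟨hX.subset.trans hCE, ?_⟩
  rw [union_singleton, nrk_indep hXiI, nrk_indep hinl, ncard_singleton,
    ncard_insert_of_notMem (fun h => hXcl (M.mem_closure_of_mem' h))
      (M.set_finite X hXi.subset_ground)]

/-! ### The key lemma: no crossing circuit between two disjoint skew maximum circuits -/

lemma star {c : ℕ} : ∀ n (M : Matroid α), M.Finite → M.E.ncard ≤ n →
    (∀ F, IsCircuitM M F → F.ncard ≤ c) →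
    ∀ C D G : Set α, IsCircuitM M C → IsCircuitM M D → Disjoint C D →
    C.ncard = c → D.ncard = c → nrk M (C ∪ D) = nrk M C + nrk M D →
    IsCircuitM M G → (G ∩ C).Nonempty → (G ∩ D).Nonempty → False := by
  intro n
  induction n using Nat.strong_induction_on with
  | _ n ih =>
  intro M hfin hn hub C D G hG0 hD0 hdisjCD hCc hDc hskew hG hGC hGD
  haveI := hfin
  -- a minimal crossing circuit
  set S : Set ℕ := {m | ∃ G', IsCircuitM M G' ∧ (G' ∩ C).Nonempty ∧ (G' ∩ D).Nonempty ∧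
    (G' \ (C ∪ D)).ncard = m} with hSdef
  have hSne : S.Nonempty := ⟨_, G, hG, hGC, hGD, rfl⟩
  obtain ⟨G1, hG1, hG1C, hG1D, hG1k⟩ := Nat.sInf_mem hSne
  have hmin : ∀ G', IsCircuitM M G' → (G' ∩ C).Nonempty → (G' ∩ D).Nonempty →
      sInf S ≤ (G' \ (C ∪ D)).ncard :=
    fun G' h1 h2 h3 => Nat.sInf_le ⟨G', h1, h2, h3, rfl⟩
  -- crossing circuits have nonempty outside
  have houtside : ∀ G', IsCircuitM M G' → (G' ∩ C).Nonempty → (G' ∩ D).Nonempty →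
      (G' \ (C ∪ D)).Nonempty := by
    intro G' h1 h2 h3
    rw [nonempty_iff_ne_empty]
    intro hemp
    have hsub : G' ⊆ C ∪ D := by
      intro a ha
      by_contra hc
      exact (eq_empty_iff_forall_notMem.1 hemp a) ⟨ha, hc⟩
    rcases circ_in_skew_union hG0 hD0 hdisjCD hskew h1 hsub with rfl | rfl
    · obtain ⟨b, hb⟩ := h3
      exact (Set.disjoint_left.1 hdisjCD) hb.1 hb.2
    · obtain ⟨b, hb⟩ := h2
      exact (Set.disjoint_left.1 hdisjCD) hb.2 hb.1
  have hCE : C ⊆ M.E := circ_subset_ground hG0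
  have hDE : D ⊆ M.E := circ_subset_ground hD0
  by_cases hA : ∀ i ∈ G1 \ (C ∪ D), i ∈ M.closure (C ∪ D)
  · -- case B
    obtain ⟨a₀, ha₀⟩ := hG1C
    obtain ⟨b₀, hb₀⟩ := hG1D
    set B' : Set α := (C \ {a₀}) ∪ (D \ {b₀}) with hB'def
    have hB'CD : B' ⊆ C ∪ D := union_subset_union diff_subset diff_subset
    have hCcl : C ⊆ M.closure B' :=
      (subset_closure_diff_singleton hG0 ha₀.2).trans
        (M.closure_subset_closure subset_union_left)
    have hDcl : D ⊆ M.closure B' :=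
      (subset_closure_diff_singleton hD0 hb₀.2).trans
        (M.closure_subset_closure subset_union_right)
    have hclcl : M.closure (C ∪ D) ⊆ M.closure B' :=
      M.closure_subset_closure_of_subset_closure (union_subset hCcl hDcl)
    set I : Set α := G1 \ (C ∪ D) with hIdef
    have hIne : I.Nonempty := houtside G1 hG1 ⟨a₀, ha₀⟩ ⟨b₀, hb₀⟩
    have hIfin : I.Finite := (circ_finite hG1).subset diff_subset
    -- fundamental circuits of outside elements
    have hfund : ∀ i ∈ I, ∃ Z2, IsCircuitM M Z2 ∧ i ∈ Z2 ∧ Z2 ⊆ insert i B' := by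
      intro i hi
      have hicl : i ∈ M.closure B' := hclcl (hA i hi)
      have hiB' : i ∉ B' := fun h => hi.2 (hB'CD h)
      exact exists_circ_of_mem_closure hicl hiB'
    by_cases hcross : ∃ i ∈ I, ∃ Z2, IsCircuitM M Z2 ∧ i ∈ Z2 ∧ Z2 ⊆ insert i B' ∧
        (Z2 ∩ C).Nonempty ∧ (Z2 ∩ D).Nonempty
    · -- the two-circuit kill
      obtain ⟨i, hiI, Z2, hZ2, hiZ2, hZ2sub, hZ2C, hZ2D⟩ := hcross
      have hZout : Z2 \ (C ∪ D) ⊆ {i} := by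
        intro z hz
        rcases mem_insert_iff.1 (hZ2sub hz.1) with rfl | h
        · exact rfl
        · exact absurd (hB'CD h) hz.2
      have hk1 : (Z2 \ (C ∪ D)).ncard ≤ 1 := by
        calc (Z2 \ (C ∪ D)).ncard ≤ ({i} : Set α).ncard :=
          ncard_le_ncard hZout (finite_singleton i)
          _ = 1 := ncard_singleton i
      have hkmin := hmin Z2 hZ2 hZ2C hZ2D
      have hI1 : I.ncard = 1 := by
        have h1 := hIne.ncard_pos hIfin
        have h2 : sInf S = I.ncard := hG1k.symm ▸ rfl
        omega
      have hIeq : I = {i} := by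
        obtain ⟨j, hj⟩ := ncard_eq_one.1 hI1
        rw [hj] at hiI ⊢
        rw [mem_singleton_iff.1 hiI]
      have hG1sub : G1 ⊆ insert i (C ∪ D) := by
        intro z hz
        by_cases hzCD : z ∈ C ∪ D
        · exact mem_insert_of_mem i hzCD
        · have : z ∈ I := ⟨hz, hzCD⟩
          rw [hIeq] at this
          exact mem_insert_iff.2 (Or.inl (mem_singleton_iff.1 this))
      have ha₀Z2 : a₀ ∉ Z2 := by
        intro hc
        rcases mem_insert_iff.1 (hZ2sub hc) with h | h
        · exact hiI.2 (Or.inl (h ▸ ha₀.2))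
        · rcases h with h | h
          · exact h.2 rfl
          · exact (Set.disjoint_left.1 hdisjCD) ha₀.2 h.1
      have hb₀Z2 : b₀ ∉ Z2 := by
        intro hc
        rcases mem_insert_iff.1 (hZ2sub hc) with h | h
        · exact hiI.2 (Or.inr (h ▸ hb₀.2))
        · rcases h with h | h
          · exact (Set.disjoint_left.1 hdisjCD) h.1 hb₀.2
          · exact h.2 rfl
      have hsubUZ : ∀ Y1, IsCircuitM M Y1 → Y1 ⊆ (G1 ∪ Z2) \ {i} → Y1 = C ∨ Y1 = D := by
        intro Y1 hY1 hY1sub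
        refine circ_in_skew_union hG0 hD0 hdisjCD hskew hY1 ?_
        intro y hy
        have hyi : y ≠ i := fun h => (hY1sub hy).2 (h ▸ rfl)
        rcases (hY1sub hy).1 with h | h
        · exact (mem_insert_iff.1 (hG1sub h)).resolve_left hyi
        · rcases mem_insert_iff.1 (hZ2sub h) with h' | h'
          · exact absurd h' hyi
          · exact hB'CD h'
      obtain ⟨Y1, hY1, ha₀Y1, hY1sub⟩ :=
        strong_elim hG1 hZ2 ⟨hiI.1, hiZ2⟩ ⟨ha₀.1, ha₀Z2⟩
      obtain ⟨Y2, hY2, hb₀Y2, hY2sub⟩ :=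
        strong_elim hG1 hZ2 ⟨hiI.1, hiZ2⟩ ⟨hb₀.1, hb₀Z2⟩
      have hY1C : Y1 = C := by
        rcases hsubUZ Y1 hY1 hY1sub with h | h
        · exact h
        · exact absurd (h ▸ ha₀Y1) (fun hc => (Set.disjoint_left.1 hdisjCD) ha₀.2 hc)
      have hY2D : Y2 = D := by
        rcases hsubUZ Y2 hY2 hY2sub with h | h
        · exact absurd (h ▸ hb₀Y2) (fun hc => (Set.disjoint_left.1 hdisjCD) hc hb₀.2)
        · exact h
      -- size contradiction
      have hCin : C ⊆ G1 ∪ Z2 := by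
        rw [← hY1C]
        exact hY1sub.trans diff_subset
      have hDin : D ⊆ G1 ∪ Z2 := by
        rw [← hY2D]
        exact hY2sub.trans diff_subset
      have hall : insert i (C ∪ D) ⊆ G1 ∪ Z2 :=
        insert_subset (Or.inl hiI.1) (union_subset hCin hDin)
      have hG1fin := circ_finite hG1
      have hZ2fin := circ_finite hZ2
      have hcard1 : (insert i (C ∪ D)).ncard = 2 * c + 1 := by
        rw [ncard_insert_of_notMem hiI.2 ((M.set_finite _ hCE).union (M.set_finite _ hDE)),
          ncard_union_eq hdisjCD (M.set_finite _ hCE) (M.set_finite _ hDE), hCc, hDc]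
        ring
      have hcard2 : (insert i (C ∪ D)).ncard ≤ (G1 ∪ Z2).ncard :=
        ncard_le_ncard hall (hG1fin.union hZ2fin)
      have hcard3 := ncard_union_add_ncard_inter G1 Z2 hG1fin hZ2fin
      have hiGZ : i ∈ G1 ∩ Z2 := mem_inter hiI.1 hiZ2
      have hcard4 : 1 ≤ (G1 ∩ Z2).ncard :=
        (Set.nonempty_of_mem hiGZ).ncard_pos (hG1fin.subset inter_subset_left)
      have hcard5 := hub G1 hG1
      have hcard6 := hub Z2 hZ2
      omega
    · -- all outside elements are one-sided
      push_neg at hcross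
      have hside : ∀ i ∈ I, i ∈ M.closure C ∨ i ∈ M.closure D := by
        intro i hi
        obtain ⟨Z2, hZ2, hiZ2, hZ2sub⟩ := hfund i hi
        have hnotcross := hcross i hi Z2 hZ2 hiZ2 hZ2sub
        have hone : Z2 ∩ C = ∅ ∨ Z2 ∩ D = ∅ := by
          by_cases hc : (Z2 ∩ C).Nonempty
          · exact Or.inr (hnotcross hc)
          · exact Or.inl (not_nonempty_iff_eq_empty.1 hc)
        rcases hone with h | h
        · -- Z2 avoids C, so i ∈ closure D
          refine Or.inr (M.closure_subset_closure (Y := D) ?_ (circ_nrk_diff hZ2 hiZ2))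
          intro z hz
          rcases mem_insert_iff.1 (hZ2sub hz.1) with rfl | h'
          · exact absurd rfl hz.2
          · rcases h' with h' | h'
            · exact absurd (eq_empty_iff_forall_notMem.1 h z) (fun hc => hc ⟨hz.1, h'.1⟩)
            · exact h'.1
        · refine Or.inl (M.closure_subset_closure (Y := C) ?_ (circ_nrk_diff hZ2 hiZ2))
          intro z hz
          rcases mem_insert_iff.1 (hZ2sub hz.1) with rfl | h'
          · exact absurd rfl hz.2
          · rcases h' with h' | h'
            · exact h'.1
            · exact absurd (eq_empty_iff_forall_notMem.1 h z) (fun hc => hc ⟨hz.1, h'.1⟩)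
      have hnotboth : ∀ i ∈ I, ¬ (i ∈ M.closure C ∧ i ∈ M.closure D) := by
        rintro i hi ⟨h1, h2⟩
        have hia : i ≠ a₀ := fun h => hi.2 (Or.inl (h ▸ ha₀.2))
        exact not_skew_of_common hskew h1 h2 hi.2
          (indep_singleton_of_mem_circ hG1 hi.1 ha₀.1 hia)
      set X1 : Set α := (G1 ∩ C) ∪ (I ∩ M.closure C) with hX1def
      set X2 : Set α := (G1 ∩ D) ∪ (I ∩ M.closure D) with hX2def
      have hX1cl : X1 ⊆ M.closure C :=
        union_subset (inter_subset_right.trans (M.subset_closure C hCE)) inter_subset_right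
      have hX2cl : X2 ⊆ M.closure D :=
        union_subset (inter_subset_right.trans (M.subset_closure D hDE)) inter_subset_right
      have hX1G : X1 ⊆ G1 := union_subset inter_subset_left (inter_subset_left.trans diff_subset)
      have hX2G : X2 ⊆ G1 := union_subset inter_subset_left (inter_subset_left.trans diff_subset)
      have hunion : X1 ∪ X2 = G1 := by
        refine Subset.antisymm (union_subset hX1G hX2G) ?_
        intro z hz
        by_cases hzC : z ∈ C
        · exact Or.inl (Or.inl ⟨hz, hzC⟩)
        by_cases hzD : z ∈ D
        · exact Or.inr (Or.inl ⟨hz, hzD⟩)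
        have hzI : z ∈ I := ⟨hz, fun h => h.elim hzC hzD⟩
        rcases hside z hzI with h | h
        · exact Or.inl (Or.inr ⟨hzI, h⟩)
        · exact Or.inr (Or.inr ⟨hzI, h⟩)
      have hdisjX : Disjoint X1 X2 := by
        refine Set.disjoint_left.2 fun z hz1 hz2 => ?_
        rcases hz1 with h1 | h1 <;> rcases hz2 with h2 | h2
        · exact (Set.disjoint_left.1 hdisjCD) h1.2 h2.2
        · exact h2.1.2 (Or.inl h1.2)
        · exact h1.1.2 (Or.inr h2.2)
        · exact hnotboth z h1.1 ⟨h1.2, h2.2⟩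
      have hb₀X1 : b₀ ∉ X1 := by
        rintro (h | h)
        · exact (Set.disjoint_left.1 hdisjCD) h.2 hb₀.2
        · exact h.1.2 (Or.inr hb₀.2)
      have ha₀X2 : a₀ ∉ X2 := by
        rintro (h | h)
        · exact (Set.disjoint_left.1 hdisjCD) ha₀.2 h.2
        · exact h.1.2 (Or.inl ha₀.2)
      have hX1ss : X1 ⊂ G1 := ssubset_of_subset_of_ne hX1G
        (fun h => hb₀X1 (h ▸ hb₀.1))
      have hX2ss : X2 ⊂ G1 := ssubset_of_subset_of_ne hX2G
        (fun h => ha₀X2 (h ▸ ha₀.1))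
      have hind : M.Indep (X1 ∪ X2) :=
        indep_union_of_skew hskew hX1cl hX2cl (hG1.2 X1 hX1ss) (hG1.2 X2 hX2ss) hdisjX
      rw [hunion] at hind
      exact hG1.1.not_indep hind
  · -- case A : contract i
    push_neg at hA
    obtain ⟨i, hiG1, hicl⟩ := hA
    have hiE : i ∈ M.E := circ_subset_ground hG1 hiG1.1
    have hiE' : ({i} : Set α) ⊆ M.E := singleton_subset_iff.2 hiE
    obtain ⟨a, ha⟩ := hG1C
    have hai : a ≠ i := fun h => hiG1.2 (Or.inl (h ▸ ha.2))
    have hinl : M.Indep {i} := indep_singleton_of_mem_circ hG1 hiG1.1 ha.1 (Ne.symm hai)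
    have hiclC : i ∉ M.closure C := fun h => hicl (M.closure_subset_closure subset_union_left h)
    have hiclD : i ∉ M.closure D := fun h => hicl (M.closure_subset_closure subset_union_right h)
    set M' := mcontractSet M {i} with hM'
    haveI hfin' : M'.Finite := mcontractSet_finite M {i}
    have hCDE : C ∪ D ⊆ M.E \ {i} := by
      refine subset_diff_singleton (union_subset (circ_subset_ground hG0)
        (circ_subset_ground hD0)) (fun h => hicl (M.mem_closure_of_mem' h))
    have hnrk1 : nrk M ({i} : Set α) = 1 := by rw [nrk_indep hinl, ncard_singleton]
    have hrkCD : nrk M' (C ∪ D) = nrk M (C ∪ D) := by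
      have h1 := nrk_mcontractSet hiE' hCDE
      rw [union_singleton, nrk_insert_of_not_mem_closure hiE hicl, hnrk1] at h1
      rw [← hM'] at h1
      omega
    have hrkC : nrk M' C = nrk M C := by
      have h1 := nrk_mcontractSet hiE' (subset_union_left.trans hCDE)
      rw [union_singleton, nrk_insert_of_not_mem_closure hiE hiclC, hnrk1] at h1
      rw [← hM'] at h1
      omega
    have hrkD : nrk M' D = nrk M D := by
      have h1 := nrk_mcontractSet hiE' (subset_union_right.trans hCDE)
      rw [union_singleton, nrk_insert_of_not_mem_closure hiE hiclD, hnrk1] at h1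
      rw [← hM'] at h1
      omega
    have hG1i : ({i} : Set α) ⊂ G1 := by
      refine ssubset_of_subset_of_ne (singleton_subset_iff.2 hiG1.1) fun hEq => ?_
      rw [← hEq] at ha
      exact hai (mem_singleton_iff.1 ha.1)
    have hG1' : IsCircuitM M' (G1 \ {i}) := circ_mcontractSet_of_subset hG1 hG1i
    have hEcard : M'.E.ncard ≤ n - 1 := by
      have h1 : M'.E = M.E \ {i} := rfl
      rw [h1, ncard_sdiff_singleton_of_mem hiE]
      have h2 : 1 ≤ M.E.ncard := (Set.nonempty_of_mem hiE).ncard_pos M.ground_finite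
      omega
    have hn1 : n - 1 < n := by
      have h2 : 1 ≤ M.E.ncard := (Set.nonempty_of_mem hiE).ncard_pos M.ground_finite
      omega
    refine ih (n - 1) hn1 M' hfin' hEcard
      (fun F hF => circ_mcontractSet_ncard_le hiE' hF hub) C D (G1 \ {i})
      (circ_contract_of_not_mem_closure hG0 hiE hiclC hinl)
      (circ_contract_of_not_mem_closure hD0 hiE hiclD hinl)
      hdisjCD hCc hDc (by rw [hrkCD, hrkC, hrkD]; exact hskew) hG1' ?_ ?_
    · exact ⟨a, ⟨ha.1, fun h => hiG1.2 (Or.inl ((mem_singleton_iff.1 h) ▸ ha.2))⟩, ha.2⟩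
    · obtain ⟨b, hb⟩ := hG1D
      exact ⟨b, ⟨hb.1, fun h => hiG1.2 (Or.inr ((mem_singleton_iff.1 h) ▸ hb.2))⟩, hb.2⟩


/-! ### More transfer lemmas -/

lemma cdle_mono {M : Matroid α} {d d' : ℕ} (h : CdLE M d) (hd : d ≤ d') : CdLE M d' := by
  induction h generalizing d' with
  | empty M d hE => exact CdLE.empty M d' hE
  | single M d e hE =>
    obtain ⟨k, rfl⟩ : ∃ k, d' = k + 1 := ⟨d' - 1, by omega⟩
    exact CdLE.single M k e hE
  | comp M d hc hcomp ih => exact CdLE.comp M d' hc (fun e he => ih e he hd)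
  | contr M d e hc he hC ih =>
    obtain ⟨k, rfl⟩ : ∃ k, d' = k + 1 := ⟨d' - 1, by omega⟩
    exact CdLE.contr M k e hc he (ih (by omega))

lemma no_loop_circ_of_conn {M : Matroid α} [M.Finite] (hconn : ConnM M)
    (h2 : 2 ≤ M.E.ncard) {x : α} (hx : IsCircuitM M {x}) : False := by
  have hxE : x ∈ M.E := circ_subset_ground hx rfl
  obtain ⟨y, hyE, hyx⟩ := Set.exists_ne_of_one_lt_ncard (s := M.E) (by omega) x
  rcases hconn x hxE y hyE with ⟨-, h⟩ | ⟨F, hF, hxF, hyF⟩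
  · exact hyx h.symm
  · have hFx : F = {x} := by
      by_contra hne
      have hss : ({x} : Set α) ⊂ F := ssubset_of_subset_of_ne (singleton_subset_iff.2 hxF)
        (Ne.symm hne)
      exact hx.1.not_indep (hF.2 _ hss)
    rw [hFx] at hyF
    exact hyx (mem_singleton_iff.1 hyF)

lemma circ_two_le_of_conn {M : Matroid α} [M.Finite] (hconn : ConnM M)
    (h2 : 2 ≤ M.E.ncard) {T : Set α} (hT : IsCircuitM M T) : 2 ≤ T.ncard := by
  rcases Nat.lt_or_ge T.ncard 2 with h | h
  · exfalso
    have h1 := circ_ncard_pos hT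
    have : T.ncard = 1 := by omega
    obtain ⟨z, hz⟩ := ncard_eq_one.1 this
    exact no_loop_circ_of_conn hconn h2 (hz ▸ hT)
  · exact h

lemma nrk_restrict {M : Matroid α} {K X : Set α} (hXK : X ⊆ K) :
    nrk (M ↾ K) X = nrk M X := by
  obtain ⟨J, hJ⟩ := M.exists_isBasis' X
  have hJ' : (M ↾ K).IsBasis' J X := by
    rw [← isBase_restrict_iff', M.restrict_restrict_eq hXK, isBase_restrict_iff']
    exact hJ
  rw [nrk_eq_of_basis' hJ', nrk_eq_of_basis' hJ]

/-- restriction and contraction commute -/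
lemma restrict_mcontractSet_comm {M : Matroid α} [M.Finite] {K S : Set α}
    (hK : K ⊆ M.E) (hSK : S ⊆ K) :
    mcontractSet (M ↾ K) S = (mcontractSet M S) ↾ (K \ S) := by
  haveI : (M ↾ K).Finite := restrict_finite (M.ground_finite.subset hK)
  refine ext_indep ?_ ?_
  · rw [mcontractSet_ground, restrict_ground_eq, restrict_ground_eq]
  · intro I hI
    rw [mcontractSet_ground, restrict_ground_eq] at hI
    rw [mcontractSet_indep_iff (show S ⊆ (M ↾ K).E from hSK), restrict_indep_iff,
      mcontractSet_indep_iff (hSK.trans hK)]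
    have h1 : nrk (M ↾ K) (I ∪ S) = nrk M (I ∪ S) :=
      nrk_restrict (union_subset ((hI.trans diff_subset)) hSK)
    have h2 : nrk (M ↾ K) S = nrk M S := nrk_restrict hSK
    constructor
    · rintro ⟨hIKS, hr⟩
      refine ⟨⟨fun a ha => ⟨hK (hI ha).1, (hI ha).2⟩, ?_⟩, hI⟩
      rw [← h1, ← h2]; exact hr
    · rintro ⟨⟨hIES, hr⟩, hIK⟩
      refine ⟨hI, ?_⟩
      rw [h1, h2]; exact hr

/-- separated circuits survive contraction -/
lemma circ_mcontractSet_of_separated {M : Matroid α} [M.Finite] {T Z : Set α}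
    (hT : IsCircuitM M T) (hZ : IsCircuitM M Z)
    (hsep : ∀ F, IsCircuitM M F → (F ∩ Z).Nonempty → F ∩ T = ∅) :
    IsCircuitM (mcontractSet M T) Z := by
  have hTE : T ⊆ M.E := circ_subset_ground hT
  have hZT : Z ∩ T = ∅ := hsep Z hZ (by
    obtain ⟨z, hz⟩ := circ_nonempty hZ
    exact ⟨z, hz, hz⟩)
  have hZE : Z ⊆ M.E \ T := fun z hz => ⟨circ_subset_ground hZ hz,
    fun ht => (eq_empty_iff_forall_notMem.1 hZT z) ⟨hz, ht⟩⟩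
  refine ⟨mcontractSet_dep_of_dep hTE hZE hZ.1, fun X hX => ?_⟩
  rw [mcontractSet_indep_iff hTE]
  refine ⟨hX.subset.trans hZE, ?_⟩
  obtain ⟨J, hJ⟩ := M.exists_isBasis' T
  have hXi : M.Indep X := hZ.2 X hX
  have hXJ : M.Indep (X ∪ J) := by
    by_contra hdep
    have hd : M.Dep (X ∪ J) := ⟨hdep,
      union_subset (hXi.subset_ground) hJ.indep.subset_ground⟩
    obtain ⟨F, hFsub, hF⟩ := exists_circ_of_dep hd
    have hFZ : (F ∩ Z).Nonempty := by
      rw [nonempty_iff_ne_empty]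
      intro hemp
      refine circ_not_subset_indep hF hJ.indep (fun a ha => ?_)
      rcases hFsub ha with h | h
      · exact absurd (⟨ha, hX.subset h⟩ : a ∈ F ∩ Z)
          (eq_empty_iff_forall_notMem.1 hemp a)
      · exact h
    have hFT := hsep F hF hFZ
    have hFX : F ⊆ X := by
      intro a ha
      rcases hFsub ha with h | h
      · exact h
      · exact absurd (⟨ha, hJ.subset h⟩ : a ∈ F ∩ T)
          (eq_empty_iff_forall_notMem.1 hFT a)
    exact circ_not_subset_indep hF hXi hFX
  have hTcl : T ⊆ M.closure J := (hJ.isBasis hTE).subset_closure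
  have h1 : nrk M (X ∪ J ∪ T) = nrk M (X ∪ J) := nrk_union_eq_of_subset_closure hTcl
  have h2 : X ∪ J ∪ T = X ∪ T := by
    rw [union_assoc, union_eq_self_of_subset_left hJ.subset]
  have hdisjXJ : Disjoint X J := Set.disjoint_left.2
    fun a ha haJ => (hZE (hX.subset ha)).2 (hJ.subset haJ)
  rw [h2] at h1
  rw [h1, nrk_indep hXJ, nrk_eq_of_basis' hJ,
    ncard_union_eq hdisjXJ (M.set_finite X hXi.subset_ground)
      (M.set_finite J hJ.indep.subset_ground)]


/-! ### The descent lemma -/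

lemma lemW {b D : ℕ} (hD : 1 ≤ D)
    (HP : ∀ N' : Matroid α, N'.Finite → (∀ Z, IsCircuitM N' Z → Z.ncard ≤ b) → CdLE N' D) :
    ∀ n (N : Matroid α), N.Finite → N.E.ncard ≤ n →
      ∀ T : Set α, (T = ∅ ∨ IsCircuitM N T) →
      (∀ Z, IsCircuitM (mcontractSet N T) Z → Z.ncard ≤ b) →
      CdLE N (T.ncard + D) := by
  intro n
  induction n using Nat.strong_induction_on with
  | _ n ih =>
  intro N hfin hn T hT hHZ
  haveI := hfin
  rcases eq_empty_or_nonempty N.E with hE | hEne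
  · exact CdLE.empty N _ hE
  have h1 : 1 ≤ N.E.ncard := hEne.ncard_pos N.ground_finite
  by_cases hconn : ConnM N
  · by_cases h2 : 2 ≤ N.E.ncard
    · -- connected with at least two elements
      rcases hT with rfl | hTcirc
      · -- no remnant : use HP
        have hNb : ∀ Z, IsCircuitM N Z → Z.ncard ≤ b := by
          intro Z hZ
          refine hHZ Z ?_
          rwa [mcontractSet_empty]
        have := HP N hfin hNb
        simpa using this
      · -- contract an element of the remnant circuit
        have hTn2 : 2 ≤ T.ncard := circ_two_le_of_conn hconn h2 hTcirc
        obtain ⟨e, he⟩ := circ_nonempty hTcirc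
        have heE : e ∈ N.E := circ_subset_ground hTcirc he
        have hTfin : T.Finite := circ_finite hTcirc
        have hss : ({e} : Set α) ⊂ T := by
          refine ssubset_of_subset_of_ne (singleton_subset_iff.2 he) fun hEq => ?_
          rw [← hEq, ncard_singleton] at hTn2
          omega
        have hT' : IsCircuitM (mcontractSet N {e}) (T \ {e}) :=
          circ_mcontractSet_of_subset hTcirc hss
        have heq : mcontractSet (mcontractSet N {e}) (T \ {e}) = mcontractSet N T := by
          rw [mcontractSet_mcontractSet, singleton_union, insert_diff_singleton,
            insert_eq_of_mem he]
        haveI hfin' : (mcontractSet N {e}).Finite := mcontractSet_finite N {e}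
        have hcard : (mcontractSet N {e}).E.ncard ≤ n - 1 := by
          rw [mcontractSet_ground, ncard_sdiff_singleton_of_mem heE]
          omega
        have ihres := ih (n - 1) (by omega) (mcontractSet N {e}) hfin' hcard
          (T \ {e}) (Or.inr hT') (fun Z hZ => hHZ Z (heq ▸ hZ))
        have hstep : T.ncard + D = ((T \ {e}).ncard + D) + 1 := by
          rw [ncard_sdiff_singleton_of_mem he]
          omega
        rw [hstep]
        refine CdLE.contr N _ e hconn heE ?_
        rw [mcontract_eq_mcontractSet]
        exact ihres
    · -- a single element
      have hE1 : N.E.ncard = 1 := by omega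
      obtain ⟨x, hx⟩ := ncard_eq_one.1 hE1
      obtain ⟨k, hk⟩ : ∃ k, T.ncard + D = k + 1 := ⟨T.ncard + D - 1, by omega⟩
      rw [hk]
      exact CdLE.single N k x hx
  · -- disconnected : recurse into components
    refine CdLE.comp N _ hconn (fun e he => ?_)
    set K : Set α := compOf N e with hKdef
    have hKE : K ⊆ N.E := compOf_subset_ground N e
    have hKss : K ⊂ N.E := compOf_ssubset hconn he
    have hKcard : K.ncard < n :=
      lt_of_lt_of_le (ncard_lt_ncard hKss N.ground_finite) hn
    haveI hfinK : (N ↾ K).Finite := restrict_finite (N.ground_finite.subset hKE)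
    have hKground : (N ↾ K).E.ncard ≤ K.ncard := by rw [restrict_ground_eq]
    rcases hT with rfl | hTcirc
    · -- no remnant
      have hNb : ∀ Z, IsCircuitM N Z → Z.ncard ≤ b := by
        intro Z hZ
        refine hHZ Z ?_
        rwa [mcontractSet_empty]
      have hres := ih K.ncard hKcard (N ↾ K) hfinK hKground ∅ (Or.inl rfl) ?_
      · exact hres
      · intro Z hZ
        rw [mcontractSet_empty] at hZ
        exact hNb Z ((circ_restrict_iff hKE).1 hZ).1
    · by_cases hTK : (T ∩ K).Nonempty
      · -- the remnant lives in this component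
        obtain ⟨t, ht⟩ := hTK
        have hTsubK : T ⊆ K := circ_subset_compOf hTcirc ht.2 ht.1
        have hTcirc' : IsCircuitM (N ↾ K) T := (circ_restrict_iff hKE).2 ⟨hTcirc, hTsubK⟩
        refine ih K.ncard hKcard (N ↾ K) hfinK hKground T (Or.inr hTcirc') ?_
        intro Z hZ
        rw [restrict_mcontractSet_comm hKE hTsubK] at hZ
        have hZ' := ((circ_restrict_iff (M := mcontractSet N T)
          (by rw [mcontractSet_ground]; exact diff_subset_diff_left hKE)).1 hZ).1
        exact hHZ Z hZ'
      · -- the remnant lives elsewhere : this component has small circuits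
        have hres := ih K.ncard hKcard (N ↾ K) hfinK hKground ∅ (Or.inl rfl) ?_
        · exact cdle_mono hres (by rw [ncard_empty]; omega)
        · intro Z hZ
          rw [mcontractSet_empty] at hZ
          obtain ⟨hZN, hZK⟩ := (circ_restrict_iff hKE).1 hZ
          have hsep : ∀ F, IsCircuitM N F → (F ∩ Z).Nonempty → F ∩ T = ∅ := by
            intro F hF hFZ
            obtain ⟨x, hx⟩ := hFZ
            have hFK : F ⊆ K := circ_subset_compOf hF (hZK hx.2) hx.1
            refine eq_empty_iff_forall_notMem.2 fun a ha => ?_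
            exact hTK ⟨a, ha.2, hFK ha.1⟩
          exact hHZ Z (circ_mcontractSet_of_separated hTcirc hZN hsep)


/-! ### The upper bound -/

lemma upper : ∀ c, 1 ≤ c → ∀ n (M : Matroid α), M.Finite → M.E.ncard ≤ n →
    (∀ Z, IsCircuitM M Z → Z.ncard ≤ c) → CdLE M (c * (c + 1) / 2) := by
  intro c
  induction c using Nat.strong_induction_on with
  | _ c ihc =>
  intro hc n
  induction n using Nat.strong_induction_on with
  | _ n ihn =>
  intro M hfin hn hub
  haveI := hfin
  rcases eq_empty_or_nonempty M.E with hE | hEne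
  · exact CdLE.empty M _ hE
  have h1 : 1 ≤ M.E.ncard := hEne.ncard_pos M.ground_finite
  have hcc2 : 1 ≤ c * (c + 1) / 2 := by
    rw [Nat.le_div_iff_mul_le (by norm_num : (0:ℕ) < 2)]
    exact Nat.mul_le_mul (by omega) (by omega)
  by_cases hconn : ConnM M
  · by_cases h2 : 2 ≤ M.E.ncard
    · -- connected with at least two elements : find a maximum circuit
      obtain ⟨x, hxE⟩ := hEne
      obtain ⟨y, hyE, hyx⟩ := Set.exists_ne_of_one_lt_ncard (s := M.E) (by omega) x
      have hcircne : ∃ Z, IsCircuitM M Z := by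
        rcases hconn x hxE y hyE with ⟨-, h⟩ | ⟨F, hF, -, -⟩
        · exact absurd h.symm hyx
        · exact ⟨F, hF⟩
      set KS : Set ℕ := {k | ∃ Z, IsCircuitM M Z ∧ Z.ncard = k} with hKSdef
      have hKSne : KS.Nonempty := by
        obtain ⟨Z, hZ⟩ := hcircne
        exact ⟨Z.ncard, Z, hZ, rfl⟩
      have hKSbdd : BddAbove KS := ⟨c, fun k hk => by
        obtain ⟨Z, hZ, hk⟩ := hk
        exact hk ▸ hub Z hZ⟩
      obtain ⟨m, hmdef⟩ : ∃ m, m = sSup KS := ⟨_, rfl⟩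
      obtain ⟨C₀, hC₀, hC₀m⟩ : ∃ Z, IsCircuitM M Z ∧ Z.ncard = m := by
        rw [hmdef]; exact Nat.sSup_mem hKSne hKSbdd
      have hubm : ∀ Z, IsCircuitM M Z → Z.ncard ≤ m := fun Z hZ => by
        rw [hmdef]; exact le_csSup hKSbdd ⟨Z, hZ, rfl⟩
      have hm2 : 2 ≤ m := hC₀m ▸ circ_two_le_of_conn hconn h2 hC₀
      have hmc : m ≤ c := hC₀m ▸ hub C₀ hC₀
      have hC₀E : C₀ ⊆ M.E := circ_subset_ground hC₀
      haveI : (mcontractSet M C₀).Finite := mcontractSet_finite M C₀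
      -- all circuits of M / C₀ have at most m - 1 elements
      have hHZ : ∀ Z, IsCircuitM (mcontractSet M C₀) Z → Z.ncard ≤ m - 1 := by
        intro Z hZ
        have hle : Z.ncard ≤ m := circ_mcontractSet_ncard_le hC₀E hZ hubm
        rcases Nat.lt_or_ge Z.ncard m with h | h
        · omega
        exfalso
        have hZm : Z.ncard = m := by omega
        obtain ⟨F, hF, hFZ, hFsub⟩ := circ_mcontractSet_lift hC₀E hZ
        have hFfin := circ_finite hF
        have hdc : (F \ C₀).ncard = m := by rw [hFZ]; exact hZm
        have hFm : F.ncard ≤ m := hubm F hF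
        have hFeq : F \ C₀ = F := eq_of_subset_of_ncard_le diff_subset (by omega) hFfin
        have hZF : Z = F := by rw [← hFZ, hFeq]
        have hdisj : Disjoint Z C₀ := by
          rw [hZF, ← hFeq]
          exact disjoint_sdiff_left
        have hZE : Z ⊆ M.E \ C₀ := hZ.1.subset_ground
        have hr := nrk_mcontractSet hC₀E hZE
        have hr1 : Z.ncard = nrk (mcontractSet M C₀) Z + 1 := circ_ncard_eq_nrk_add_one hZ
        have hr2 : Z.ncard = nrk M Z + 1 := by
          rw [hZF]
          exact circ_ncard_eq_nrk_add_one hF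
        have hskew : nrk M (Z ∪ C₀) = nrk M Z + nrk M C₀ := by omega
        obtain ⟨z0, hz0⟩ := circ_nonempty hZ
        obtain ⟨y0, hy0⟩ := circ_nonempty hC₀
        have hz0E : z0 ∈ M.E := (hZE hz0).1
        rcases hconn z0 hz0E y0 (hC₀E hy0) with ⟨-, hEq⟩ | ⟨G, hG, hzG, hyG⟩
        · exact (Set.disjoint_left.1 hdisj) hz0 (hEq ▸ hy0)
        · exact star (c := m) M.E.ncard M hfin le_rfl hubm Z C₀ G (hZF ▸ hF) hC₀ hdisj
            hZm hC₀m hskew hG ⟨z0, hzG, hz0⟩ ⟨y0, hyG, hy0⟩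
      -- apply the descent lemma
      have hD1 : 1 ≤ (m - 1) * ((m - 1) + 1) / 2 := by
        rw [Nat.le_div_iff_mul_le (by norm_num : (0:ℕ) < 2)]
        exact Nat.mul_le_mul (by omega) (by omega)
      have HP : ∀ N' : Matroid α, N'.Finite →
          (∀ Z, IsCircuitM N' Z → Z.ncard ≤ m - 1) →
          CdLE N' ((m - 1) * ((m - 1) + 1) / 2) := by
        intro N' hfin' hub'
        exact ihc (m - 1) (by omega) (by omega) N'.E.ncard N' hfin' le_rfl hub'
      have hres := lemW hD1 HP M.E.ncard M hfin le_rfl C₀ (Or.inr hC₀) hHZ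
      rw [hC₀m] at hres
      have hid : m + (m - 1) * ((m - 1) + 1) / 2 = m * (m + 1) / 2 := by
        obtain ⟨k, rfl⟩ : ∃ k, m = k + 1 := ⟨m - 1, by omega⟩
        simp only [Nat.add_sub_cancel]
        have hk : (k + 1) * ((k + 1) + 1) = k * (k + 1) + 2 * (k + 1) := by ring
        rw [hk, Nat.add_mul_div_left _ _ (by norm_num : (0:ℕ) < 2)]
        omega
      rw [hid] at hres
      refine cdle_mono hres ?_
      exact Nat.div_le_div_right (Nat.mul_le_mul hmc (by omega))
    · -- a single element
      have hE1 : M.E.ncard = 1 := by omega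
      obtain ⟨x, hx⟩ := ncard_eq_one.1 hE1
      obtain ⟨k, hk⟩ : ∃ k, c * (c + 1) / 2 = k + 1 := ⟨c * (c + 1) / 2 - 1, by omega⟩
      rw [hk]
      exact CdLE.single M k x hx
  · -- disconnected
    refine CdLE.comp M _ hconn (fun e he => ?_)
    have hKE : compOf M e ⊆ M.E := compOf_subset_ground M e
    have hKss : compOf M e ⊂ M.E := compOf_ssubset hconn he
    have hKcard : (compOf M e).ncard < n :=
      lt_of_lt_of_le (ncard_lt_ncard hKss M.ground_finite) hn
    haveI hfinK : (M ↾ compOf M e).Finite := restrict_finite (M.ground_finite.subset hKE)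
    refine ihn (compOf M e).ncard hKcard (M ↾ compOf M e) hfinK
      (by rw [restrict_ground_eq]) ?_
    intro Z hZ
    exact hub Z ((circ_restrict_iff hKE).1 hZ).1

end CDWork

/-!
STATEMENT 11: If `M` is a matroid whose largest circuit has size `c` (with
`c = 1` if `M` has no circuit), then `log₂ c ≤ cd(M) ≤ c(c+1)/2`, where the
first inequality is expressed as `c ≤ 2 ^ cd(M)`.
-/
theorem stmt11 {α : Type*} (M : Matroid α) [M.Finite] (c : ℕ)
    (hub : ∀ C, IsCircuitM M C → C.ncard ≤ c)
    (hmax : (∃ C, IsCircuitM M C ∧ C.ncard = c) ∨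
      ((¬ ∃ C, IsCircuitM M C) ∧ c = 1)) :
    c ≤ 2 ^ cdepth M ∧ cdepth M ≤ c * (c + 1) / 2 := by
  classical
  have hc1 : 1 ≤ c := by
    rcases hmax with ⟨C, hC, hCc⟩ | ⟨-, rfl⟩
    · exact hCc ▸ CDWork.circ_ncard_pos hC
    · exact le_rfl
  have hupper : CdLE M (c * (c + 1) / 2) :=
    CDWork.upper c hc1 M.E.ncard M inferInstance le_rfl hub
  have hne : {d | CdLE M d}.Nonempty := ⟨_, hupper⟩
  have hmem : CdLE M (cdepth M) := Nat.sInf_mem hne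
  constructor
  · rcases hmax with ⟨C, hC, hCc⟩ | ⟨-, rfl⟩
    · calc c = C.ncard := hCc.symm
        _ ≤ 2 ^ cdepth M := CDWork.cdle_circ_bound hmem inferInstance C hC
    · exact Nat.one_le_two_pow
  · exact Nat.sInf_le hupper
end
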